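/- arXiv:1711.01498 — 9 statements merged into one kernel-verified Lean document; each statement's English description precedes it below -/
import Mathlib

section
/- Let M ∈ ℕ^{m×m} be a nonnegative integer matrix that is diagonalizable over ℂ, has a simple real eigenvalue λ > 1, and all of whose other eigenvalues have absolute value strictly less than 1. Let w = (ℓ_1,…,ℓ_m) be a positive row vector with wM = λw, let v be a positive column vector with Mv = λv normalized so its entries sum to 1, and set δ = w·v. Then there is c_σ ∈ [0,1) such that for every i ∈ {1,…,m} there is a constant c_i > 0 with |λ^k ℓ_i − n^i_k · δ| < c_i · c_σ^k for all k ∈ ℕ, where n^i_k = Σ_{j=1}^m (M^k)_{j,i} is the sum of the entries of the i-th column of M^k. -/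
open Matrix Polynomial

theorem supertile_length_error {m : ℕ} (M : Matrix (Fin m) (Fin m) ℕ)
    -- `M` is diagonalizable over `ℂ`
    (hdiag : ∃ (C D : Matrix (Fin m) (Fin m) ℂ), IsUnit C.det ∧ D.IsDiag ∧
      M.map (fun n => (n : ℂ)) = C * D * C⁻¹)
    (lam : ℝ) (hlam : 1 < lam)
    -- `lam` is a simple eigenvalue of `M`
    (hsimple : (Matrix.charpoly (M.map (fun n => (n : ℂ)))).rootMultiplicity (lam : ℂ) = 1)
    -- all other eigenvalues of `M` have absolute value `< 1`
    (hsmall : ∀ z : ℂ, (Matrix.charpoly (M.map (fun n => (n : ℂ)))).IsRoot z →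
      z ≠ (lam : ℂ) → ‖z‖ < 1)
    -- `w` is a positive left eigenvector
    (w : Fin m → ℝ) (hw : ∀ i, 0 < w i)
    (hweig : Matrix.vecMul w (M.map (fun n => (n : ℝ))) = lam • w)
    -- `v` is a positive right eigenvector, normalized
    (v : Fin m → ℝ) (hv : ∀ i, 0 < v i)
    (hveig : Matrix.mulVec (M.map (fun n => (n : ℝ))) v = lam • v)
    (hvnorm : ∑ i, v i = 1)
    (δ : ℝ) (hδ : δ = ∑ i, w i * v i) :
    ∃ cσ : ℝ, 0 ≤ cσ ∧ cσ < 1 ∧ ∀ i : Fin m, ∃ ci : ℝ, 0 < ci ∧ ∀ k : ℕ,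
      |lam ^ k * w i - (∑ j, ((M ^ k) j i : ℝ)) * δ| < ci * cσ ^ k := by
  classical
  obtain ⟨C, D, hC, hD, hCDC⟩ := hdiag
  set N : Matrix (Fin m) (Fin m) ℂ := M.map (fun n => (n : ℂ)) with hNdef
  set d : Fin m → ℂ := fun j => D j j with hddef
  have hDdiag : D = Matrix.diagonal d := by
    ext i j
    rcases eq_or_ne i j with rfl | h
    · simp [hddef]
    · simp [Matrix.diagonal_apply_ne _ h, hD h]
  have hCC : C * C⁻¹ = 1 := Matrix.mul_nonsing_inv C hC
  have hCC' : C⁻¹ * C = 1 := Matrix.nonsing_inv_mul C hC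
  -- the charpoly of N is ∏ (X - d j)
  have hchar : N.charpoly = ∏ j, (X - Polynomial.C (d j)) := by
    set f : Matrix (Fin m) (Fin m) ℂ →+* Matrix (Fin m) (Fin m) ℂ[X] :=
      (Polynomial.C : ℂ →+* ℂ[X]).mapMatrix with hf
    have hfC : f C * f C⁻¹ = 1 := by rw [← _root_.map_mul, hCC, _root_.map_one]
    have hcm : charmatrix (C * D * C⁻¹) = f C * charmatrix D * f C⁻¹ := by
      unfold charmatrix
      rw [mul_sub, sub_mul]
      congr 1
      · rw [← Matrix.scalar_commute (X : ℂ[X]) (fun r => Commute.all _ _) (f C), mul_assoc, hfC,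
          mul_one]
      · rw [hf]
        simp only [← RingHom.mapMatrix_apply, ← _root_.map_mul]
    have h1 : (f C).det * (f C⁻¹).det = 1 := by rw [← det_mul, hfC, det_one]
    have h2 : (C * D * C⁻¹).charpoly = D.charpoly := by
      rw [Matrix.charpoly, hcm, det_mul, det_mul, mul_right_comm, h1, one_mul, Matrix.charpoly]
    rw [hCDC, h2, hDdiag, Matrix.charpoly]
    have h3 : charmatrix (Matrix.diagonal d) =
        Matrix.diagonal (fun j => X - Polynomial.C (d j)) := by
      ext i j
      rcases eq_or_ne i j with rfl | h
      · simp
      · simp [h]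
    rw [h3, det_diagonal]
  -- there is a unique index j₀ with d j₀ = lam
  have hroots : N.charpoly.roots = Finset.univ.val.map d := by
    rw [hchar, Finset.prod_eq_multiset_prod,
      show (Multiset.map (fun j => X - Polynomial.C (d j)) Finset.univ.val) =
        Multiset.map (fun a => X - Polynomial.C a) (Multiset.map d Finset.univ.val) by
          rw [Multiset.map_map]; rfl,
      roots_multiset_prod_X_sub_C]
  obtain ⟨j₀, hj₀⟩ : ∃ j₀ : Fin m, ∀ j, d j = (lam : ℂ) ↔ j = j₀ := by
    have hcount : (Finset.univ.val.map d).count (lam : ℂ) = 1 := by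
      rw [← hroots, count_roots, hsimple]
    rw [Multiset.count_map] at hcount
    have hcard : (Finset.univ.filter (fun j => (lam : ℂ) = d j)).card = 1 := hcount
    obtain ⟨j₀, hj₀⟩ := Finset.card_eq_one.mp hcard
    refine ⟨j₀, fun j => ?_⟩
    constructor
    · intro hdj
      have : j ∈ Finset.univ.filter (fun j => (lam : ℂ) = d j) := by simp [hdj]
      rw [hj₀] at this; simpa using this
    · rintro rfl
      have : j ∈ Finset.univ.filter (fun j => (lam : ℂ) = d j) := by rw [hj₀]; simp
      simp at this
      exact this.symm
  -- other eigenvalues are small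
  have hdsmall : ∀ j, j ≠ j₀ → ‖d j‖ < 1 := by
    intro j hj
    refine hsmall (d j) ?_ (fun h => hj ((hj₀ j).mp h))
    have hmem : d j ∈ N.charpoly.roots := by
      rw [hroots]; exact Multiset.mem_map_of_mem d (Finset.mem_univ_val j)
    exact isRoot_of_mem_roots hmem
  -- complexified eigenvectors
  set vC : Fin m → ℂ := fun l => (v l : ℂ) with hvC
  have hveigC : N *ᵥ vC = (lam : ℂ) • vC := by
    funext i
    have h0 := congrFun hveig i
    simp only [Matrix.mulVec, dotProduct, Matrix.map_apply, Pi.smul_apply,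
      smul_eq_mul] at h0
    simp only [hNdef, hvC, Matrix.mulVec, dotProduct, Matrix.map_apply, Pi.smul_apply,
      smul_eq_mul]
    exact_mod_cast congrArg (fun x : ℝ => (x : ℂ)) h0
  -- column j₀ of C is proportional to vC
  set y : Fin m → ℂ := C⁻¹ *ᵥ vC with hy
  have hyeig : ∀ j, d j * y j = (lam : ℂ) * y j := by
    intro j
    have h1 : Matrix.diagonal d *ᵥ y = (lam : ℂ) • y := by
      have h5 : C⁻¹ *ᵥ (N *ᵥ vC) = C⁻¹ *ᵥ ((lam : ℂ) • vC) := by rw [hveigC]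
      rw [Matrix.mulVec_smul, Matrix.mulVec_mulVec, hCDC,
        show C⁻¹ * (C * D * C⁻¹) = D * C⁻¹ by
          rw [← mul_assoc, ← mul_assoc, hCC', one_mul],
        hDdiag, ← Matrix.mulVec_mulVec] at h5
      exact h5
    have := congrFun h1 j
    simpa [Matrix.mulVec_diagonal] using this
  have hyzero : ∀ j, j ≠ j₀ → y j = 0 := by
    intro j hj
    by_contra hne
    exact hj ((hj₀ j).mp (mul_right_cancel₀ hne (hyeig j)))
  have hvCol : ∀ l, vC l = C l j₀ * y j₀ := by
    intro l
    have h1 : C *ᵥ y = vC := by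
      rw [hy, Matrix.mulVec_mulVec, hCC, Matrix.one_mulVec]
    have := congrFun h1 l
    rw [← this]
    simp only [Matrix.mulVec, dotProduct]
    rw [Finset.sum_eq_single j₀]
    · intro b _ hb
      rw [hyzero b hb, mul_zero]
    · intro h; exact absurd (Finset.mem_univ j₀) h
  have hy0 : y j₀ ≠ 0 := by
    intro h
    have h2 := hvCol j₀
    rw [h, mul_zero] at h2
    simp only [hvC] at h2
    exact (hv j₀).ne' (by exact_mod_cast h2)
  -- the vector u
  set u : Fin m → ℂ := fun l => (w l : ℂ) - (δ : ℂ) with hu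
  have huv : ∑ l, u l * vC l = 0 := by
    have h1 : ∑ l, ((w l : ℂ)) * (v l : ℂ) = (δ : ℂ) := by
      have := congrArg (fun x : ℝ => (x : ℂ)) hδ
      push_cast at this
      exact this.symm
    have h2 : ∑ l, ((v l : ℂ)) = 1 := by
      have := congrArg (fun x : ℝ => (x : ℂ)) hvnorm
      push_cast at this
      exact this
    have h3 : ∑ l, u l * vC l = (∑ l, ((w l : ℂ)) * (v l : ℂ)) - (δ : ℂ) * ∑ l, ((v l : ℂ)) := by
      rw [Finset.mul_sum, ← Finset.sum_sub_distrib]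
      refine Finset.sum_congr rfl fun l _ => ?_
      simp only [hu, hvC]
      ring
    rw [h3, h1, h2, mul_one, sub_self]
  have huC : Matrix.vecMul u C j₀ = 0 := by
    have : Matrix.vecMul u C j₀ = ∑ l, u l * C l j₀ := rfl
    rw [this]
    calc ∑ l, u l * C l j₀ = ∑ l, u l * (vC l * (y j₀)⁻¹) := by
          refine Finset.sum_congr rfl fun l _ => ?_
          have h4 : C l j₀ = vC l * (y j₀)⁻¹ := by
            rw [hvCol l, mul_assoc, mul_inv_cancel₀ hy0, mul_one]
          rw [h4]
      _ = (∑ l, u l * vC l) * (y j₀)⁻¹ := by rw [Finset.sum_mul]; simp [mul_assoc]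
      _ = 0 := by rw [huv, zero_mul]
  -- powers of N
  have hNk : ∀ k : ℕ, N ^ k = C * Matrix.diagonal (fun j => d j ^ k) * C⁻¹ := by
    intro k
    induction k with
    | zero => simp [Matrix.diagonal_one, hCC]
    | succ k ih =>
      rw [pow_succ, ih, hCDC, hDdiag]
      calc C * Matrix.diagonal (fun j => d j ^ k) * C⁻¹ * (C * Matrix.diagonal d * C⁻¹)
          = C * (Matrix.diagonal (fun j => d j ^ k) * (C⁻¹ * C) * Matrix.diagonal d) * C⁻¹ := by
            noncomm_ring
        _ = C * Matrix.diagonal (fun j => d j ^ (k + 1)) * C⁻¹ := by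
            rw [hCC', mul_one, Matrix.diagonal_mul_diagonal,
              show (fun j => d j ^ k * d j) = fun j => d j ^ (k + 1) from
                funext fun j => (pow_succ _ _).symm]
  -- the error identity
  have hmapmul : ∀ (A B : Matrix (Fin m) (Fin m) ℕ),
      (A * B).map (fun n => (n : ℝ)) = A.map (fun n => (n : ℝ)) * B.map (fun n => (n : ℝ)) := by
    intro A B
    ext i j
    simp only [Matrix.map_apply, Matrix.mul_apply]
    push_cast
    rfl
  have hwk : ∀ k : ℕ, Matrix.vecMul w ((M ^ k).map (fun n => (n : ℝ))) = (lam ^ k) • w := by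
    intro k
    induction k with
    | zero =>
      rw [pow_zero, Matrix.map_one _ Nat.cast_zero Nat.cast_one, Matrix.vecMul_one, pow_zero,
        one_smul]
    | succ k ih =>
      rw [pow_succ, hmapmul, ← Matrix.vecMul_vecMul, ih, Matrix.smul_vecMul, hweig,
        pow_succ, smul_smul]
  have hNkmap : ∀ k : ℕ, N ^ k = (M ^ k).map (fun n => (n : ℂ)) := by
    intro k
    have : N = (Nat.castRingHom ℂ).mapMatrix M := rfl
    rw [this, ← _root_.map_pow]
    rfl
  have herr : ∀ (k : ℕ) (i : Fin m),
      ((lam ^ k * w i - (∑ j, ((M ^ k) j i : ℝ)) * δ : ℝ) : ℂ) = Matrix.vecMul u (N ^ k) i := by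
    intro k i
    rw [hNkmap k]
    simp only [Matrix.vecMul, dotProduct, hu, Matrix.map_apply, sub_mul,
      Finset.sum_sub_distrib]
    have h1 : ∑ l, ((w l : ℂ)) * ((M ^ k) l i : ℂ) = ((lam ^ k * w i : ℝ) : ℂ) := by
      have := congrFun (hwk k) i
      simp only [Matrix.vecMul, dotProduct, Matrix.map_apply, Pi.smul_apply,
        smul_eq_mul] at this
      rw [← this]
      push_cast
      rfl
    have h2 : ∑ l, ((δ : ℂ)) * ((M ^ k) l i : ℂ) = (((∑ j, ((M ^ k) j i : ℝ)) * δ : ℝ) : ℂ) := by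
      rw [← Finset.mul_sum]
      push_cast
      ring
    rw [h1, h2]
    push_cast
    ring
  -- define cσ
  have hne : (Finset.univ : Finset (Fin m)).Nonempty := ⟨j₀, Finset.mem_univ j₀⟩
  set g : Fin m → ℝ := fun j => if j = j₀ then 1/2 else ‖d j‖ with hg
  have hgj : ∀ j, g j = if j = j₀ then 1/2 else ‖d j‖ := fun j => rfl
  set cσ : ℝ := Finset.univ.sup' hne g with hcσ
  have hg_le : ∀ j, g j ≤ cσ := fun j => Finset.le_sup' g (Finset.mem_univ j)
  have hcσ_half : (1:ℝ)/2 ≤ cσ := by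
    have h6 := hg_le j₀
    rwa [hgj, if_pos rfl] at h6
  have hcσ_pos : 0 < cσ := lt_of_lt_of_le (by norm_num) hcσ_half
  refine ⟨cσ, le_of_lt hcσ_pos, ?_, ?_⟩
  · rw [hcσ]
    apply Finset.sup'_lt_iff hne |>.mpr
    intro j _
    rw [hgj]
    split_ifs with h
    · norm_num
    · exact hdsmall j h
  · intro i
    set B : ℝ := ∑ j, ‖Matrix.vecMul u C j‖ * ‖C⁻¹ j i‖ with hB
    have hB0 : 0 ≤ B := Finset.sum_nonneg fun j _ =>
      mul_nonneg (norm_nonneg _) (norm_nonneg _)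
    refine ⟨B + 1, by linarith, fun k => ?_⟩
    have habs : |lam ^ k * w i - (∑ j, ((M ^ k) j i : ℝ)) * δ| =
        ‖Matrix.vecMul u (N ^ k) i‖ := by
      rw [← herr k i, Complex.norm_real, Real.norm_eq_abs]
    rw [habs]
    have hform : Matrix.vecMul u (N ^ k) i =
        ∑ j, Matrix.vecMul u C j * (d j ^ k) * C⁻¹ j i := by
      have e1 : (Matrix.vecMul u C) ᵥ* Matrix.diagonal (fun j => d j ^ k) =
          fun j => Matrix.vecMul u C j * d j ^ k := by
        funext j
        rw [Matrix.vecMul_diagonal]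
      rw [hNk k, ← Matrix.vecMul_vecMul, ← Matrix.vecMul_vecMul, e1]
      simp [Matrix.vecMul, dotProduct]
    have hterm : ∀ j, ‖Matrix.vecMul u C j * (d j ^ k) * C⁻¹ j i‖ ≤
        (‖Matrix.vecMul u C j‖ * ‖C⁻¹ j i‖) * cσ ^ k := by
      intro j
      rw [norm_mul, norm_mul, norm_pow]
      rcases eq_or_ne j j₀ with rfl | hj
      · rw [huC]
        simp only [norm_zero, zero_mul]
        positivity
      · have hdj : ‖d j‖ ≤ cσ := by
          have h7 := hg_le j
          rwa [hgj, if_neg hj] at h7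
        have h1 : ‖d j‖ ^ k ≤ cσ ^ k :=
          pow_le_pow_left₀ (norm_nonneg _) hdj k
        calc ‖Matrix.vecMul u C j‖ * ‖d j‖ ^ k * ‖C⁻¹ j i‖
            = (‖Matrix.vecMul u C j‖ * ‖C⁻¹ j i‖) *
              ‖d j‖ ^ k := by ring
          _ ≤ (‖Matrix.vecMul u C j‖ * ‖C⁻¹ j i‖) * cσ ^ k := by
              gcongr
    have hcσk : 0 < cσ ^ k := pow_pos hcσ_pos k
    calc ‖Matrix.vecMul u (N ^ k) i‖
        = ‖∑ j, Matrix.vecMul u C j * (d j ^ k) * C⁻¹ j i‖ := by rw [hform]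
      _ ≤ ∑ j, ‖Matrix.vecMul u C j * (d j ^ k) * C⁻¹ j i‖ :=
          norm_sum_le _ _
      _ ≤ ∑ j, (‖Matrix.vecMul u C j‖ * ‖C⁻¹ j i‖) * cσ ^ k :=
          Finset.sum_le_sum fun j _ => hterm j
      _ = B * cσ ^ k := by rw [← Finset.sum_mul]
      _ < (B + 1) * cσ ^ k := by nlinarith
end

section
/- Let σ be a substitution on the alphabet {1,…,m} whose substitution matrix M_σ is diagonalizable over ℂ, has a simple real eigenvalue λ > 1, and all of whose other eigenvalues have absolute value strictly less than 1; let c_σ < 1 be the maximum absolute value of the eigenvalues of M_σ other than λ. Let w = (ℓ_1,…,ℓ_m) be a positive row vector with wM_σ = λw, let v be the positive right eigenvector of M_σ for λ normalized so its entries sum to 1, and set δ = w·v. For a nonempty word u = u_1⋯u_n over {1,…,m} define ε(u) = max_{1 ≤ j ≤ n} |Σ_{t ≤ j} ℓ_{u_t} − j·δ|. Then there is a constant C > 0, independent of k and i, such that for every k > 1 and every letter i, ε(σ^k(i)) ≤ max_{1 ≤ j ≤ m} ε(σ^{k−1}(j)) + C·c_σ^{k−1}. -/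
open Matrix Polynomial

/-- Application of a substitution to a word, by concatenation. -/
def substWord {m : ℕ} (σ : Fin m → List (Fin m)) (u : List (Fin m)) : List (Fin m) :=
  u.flatMap σ

/-- `σ^k(i)`: the word obtained by applying `σ` `k` times to the letter `i`. -/
def substIter {m : ℕ} (σ : Fin m → List (Fin m)) (k : ℕ) (i : Fin m) : List (Fin m) :=
  (substWord σ)^[k] [i]

/-- The substitution matrix: the `(i,j)` entry counts occurrences of letter `i` in `σ(j)`. -/
def substMatrix {m : ℕ} (σ : Fin m → List (Fin m)) : Matrix (Fin m) (Fin m) ℕ :=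
  fun i j => (σ j).count i

/-- `ε(u) = max_{1 ≤ j ≤ n} |Σ_{t ≤ j} ℓ_{u_t} − j·δ|` for a word `u` of length `n`
(the maximum of nonnegative numbers, computed as a fold starting from `0`). -/
noncomputable def wordError {m : ℕ} (ℓ : Fin m → ℝ) (δ : ℝ) (u : List (Fin m)) : ℝ :=
  ((List.range u.length).map
    (fun j => |((u.take (j + 1)).map ℓ).sum - (j + 1 : ℕ) * δ|)).foldr max 0

lemma foldr_max_nonneg (l : List ℝ) : 0 ≤ l.foldr max 0 := by
  induction l with
  | nil => simp
  | cons a t ih => exact le_trans ih (le_max_right _ _)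

lemma le_foldr_max {l : List ℝ} {x : ℝ} (hx : x ∈ l) : x ≤ l.foldr max 0 := by
  induction l with
  | nil => simp at hx
  | cons a t ih =>
    rcases List.mem_cons.1 hx with h | h
    · subst h; exact le_max_left _ _
    · exact le_trans (ih h) (le_max_right _ _)

lemma foldr_max_le {l : List ℝ} {B : ℝ} (h0 : 0 ≤ B) (h : ∀ x ∈ l, x ≤ B) :
    l.foldr max 0 ≤ B := by
  induction l with
  | nil => simpa
  | cons a t ih =>
    exact max_le (h a (List.mem_cons_self)) (ih fun x hx => h x (List.mem_cons_of_mem _ hx))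

lemma wordError_nonneg {m : ℕ} (ℓ : Fin m → ℝ) (δ : ℝ) (u : List (Fin m)) :
    0 ≤ wordError ℓ δ u := foldr_max_nonneg _

lemma le_wordError {m : ℕ} (ℓ : Fin m → ℝ) (δ : ℝ) (u : List (Fin m)) {j : ℕ}
    (hj : j < u.length) :
    |((u.take (j + 1)).map ℓ).sum - (j + 1 : ℕ) * δ| ≤ wordError ℓ δ u :=
  le_foldr_max (List.mem_map_of_mem (List.mem_range.2 hj))

lemma wordError_le {m : ℕ} (ℓ : Fin m → ℝ) (δ : ℝ) (u : List (Fin m)) {B : ℝ} (hB : 0 ≤ B)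
    (h : ∀ j < u.length, |((u.take (j + 1)).map ℓ).sum - (j + 1 : ℕ) * δ| ≤ B) :
    wordError ℓ δ u ≤ B := by
  refine foldr_max_le hB ?_
  intro x hx
  obtain ⟨j, hj, rfl⟩ := List.mem_map.1 hx
  exact h j (List.mem_range.1 hj)

lemma substWord_append {m : ℕ} (σ : Fin m → List (Fin m)) (x y : List (Fin m)) :
    substWord σ (x ++ y) = substWord σ x ++ substWord σ y := by
  simp [substWord]

lemma iter_substWord_append {m : ℕ} (σ : Fin m → List (Fin m)) (n : ℕ) (x y : List (Fin m)) :
    (substWord σ)^[n] (x ++ y) = (substWord σ)^[n] x ++ (substWord σ)^[n] y := by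
  induction n generalizing x y with
  | zero => simp
  | succ n ih => simp [Function.iterate_succ_apply, substWord_append, ih]

lemma iter_substWord_eq {m : ℕ} (σ : Fin m → List (Fin m)) (n : ℕ) (u : List (Fin m)) :
    (substWord σ)^[n] u = u.flatMap (substIter σ n) := by
  induction u with
  | nil =>
    have : ∀ k : ℕ, (substWord σ)^[k] ([] : List (Fin m)) = [] := by
      intro k; induction k with
      | zero => rfl
      | succ k ih => simp [Function.iterate_succ_apply, substWord, ih]
    simp [this]
  | cons a t ih =>
    have h : a :: t = [a] ++ t := rfl
    rw [h, iter_substWord_append]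
    simp [substIter, ih]

lemma substIter_succ {m : ℕ} (σ : Fin m → List (Fin m)) (n : ℕ) (i : Fin m) :
    substIter σ (n + 1) i = (σ i).flatMap (substIter σ n) := by
  rw [substIter, Function.iterate_succ_apply, ← iter_substWord_eq]
  congr 1
  simp [substWord]

lemma list_sum_map_count {m : ℕ} (u : List (Fin m)) (f : Fin m → ℝ) :
    (u.map f).sum = ∑ b : Fin m, (u.count b : ℝ) * f b := by
  induction u with
  | nil => simp
  | cons a t ih =>
    simp only [List.map_cons, List.sum_cons, ih, List.count_cons]
    push_cast
    rw [Finset.sum_congr rfl (fun b _ => add_mul ((t.count b : ℝ)) _ (f b)),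
      Finset.sum_add_distrib]
    have h2 : ∀ b ∈ Finset.univ, ((if (a == b) = true then 1 else 0 : ℝ)) * f b
        = if b = a then f b else 0 := by
      intro b _
      by_cases h : a = b
      · subst h; simp
      · rw [if_neg (by simpa using h), if_neg (fun hh => h hh.symm), zero_mul]
    rw [Finset.sum_congr rfl h2, Finset.sum_ite_eq' Finset.univ a f]
    simp [add_comm]

lemma prefix_block_bound {m : ℕ} (w : Fin m → ℝ) (δ : ℝ) (T : Fin m → List (Fin m))
    {B E : ℝ} (hB0 : 0 ≤ B) (hE0 : 0 ≤ E)
    (hB : ∀ a, |((T a).map w).sum - δ * (T a).length| ≤ B)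
    (hE : ∀ a, ∀ j < (T a).length,
      |(((T a).take (j + 1)).map w).sum - (j + 1 : ℕ) * δ| ≤ E) :
    ∀ (u : List (Fin m)), ∀ j < (u.flatMap T).length,
      |(((u.flatMap T).take (j + 1)).map w).sum - (j + 1 : ℕ) * δ| ≤ E + u.length * B := by
  intro u
  induction u with
  | nil => intro j hj; simp at hj
  | cons a t ih =>
    intro j hj
    rw [List.flatMap_cons] at hj ⊢
    rw [List.take_append]
    by_cases hle : j + 1 ≤ (T a).length
    · rw [Nat.sub_eq_zero_of_le hle, List.take_zero, List.append_nil]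
      calc |(((T a).take (j + 1)).map w).sum - (j + 1 : ℕ) * δ| ≤ E :=
            hE a j (by omega)
        _ ≤ E + (a :: t).length * B := by
            have : (0:ℝ) ≤ (a :: t).length * B := by positivity
            linarith
    · push_neg at hle
      have hTa : (T a).take (j+1) = T a := List.take_of_length_le (by omega)
      rw [hTa]
      have hlen : j - (T a).length < (t.flatMap T).length := by
        rw [List.length_append] at hj; omega
      have key := ih (j - (T a).length) hlen
      have hjj : j + 1 - (T a).length = (j - (T a).length) + 1 := by omega
      rw [hjj]
      rw [List.map_append, List.sum_append]
      have hcast : ((j + 1 : ℕ) : ℝ) = ((T a).length : ℝ) + (((j - (T a).length) + 1 : ℕ) : ℝ) := by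
        have h2 : (T a).length ≤ j := by omega
        push_cast [Nat.cast_sub h2]
        ring
      rw [hcast]
      have habs : |(List.map w (T a)).sum + (List.map w (List.take (j - (T a).length + 1) (t.flatMap T))).sum
          - (((T a).length : ℝ) + ((j - (T a).length + 1 : ℕ) : ℝ)) * δ| ≤
          |(List.map w (T a)).sum - δ * (T a).length|
          + |(List.map w (List.take (j - (T a).length + 1) (t.flatMap T))).sum
            - ((j - (T a).length + 1 : ℕ) : ℝ) * δ| := by
        have heq : (List.map w (T a)).sum + (List.map w (List.take (j - (T a).length + 1) (t.flatMap T))).sum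
            - (((T a).length : ℝ) + ((j - (T a).length + 1 : ℕ) : ℝ)) * δ
            = ((List.map w (T a)).sum - δ * (T a).length)
              + ((List.map w (List.take (j - (T a).length + 1) (t.flatMap T))).sum
                - ((j - (T a).length + 1 : ℕ) : ℝ) * δ) := by ring
        rw [heq]
        exact abs_add_le _ _
      calc _ ≤ _ := habs
        _ ≤ B + (E + t.length * B) := add_le_add (hB a) key
        _ ≤ E + (a :: t).length * B := by
            simp only [List.length_cons]
            push_cast
            ring_nf
            linarith

lemma phi_eq {m : ℕ} (σ : Fin m → List (Fin m)) (w : Fin m → ℝ) (δ : ℝ) (n : ℕ) (a : Fin m) :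
    ((substIter σ n a).map w).sum - δ * (substIter σ n a).length
      = Matrix.vecMul (fun b => w b - δ) (((substMatrix σ).map (fun x : ℕ => (x : ℝ))) ^ n) a := by
  induction n generalizing a with
  | zero =>
    simp [substIter, Matrix.vecMul_one]
  | succ n ih =>
    rw [substIter_succ]
    have hsum : ∀ (u : List (Fin m)),
        ((u.flatMap (substIter σ n)).map w).sum - δ * (u.flatMap (substIter σ n)).length
        = (u.map (fun b => ((substIter σ n b).map w).sum - δ * (substIter σ n b).length)).sum := by
      intro u
      induction u with
      | nil => simp
      | cons b t iht =>
        simp only [List.flatMap_cons, List.map_append, List.sum_append, List.length_append,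
          List.map_cons, List.sum_cons]
        push_cast
        rw [← iht]
        ring
    rw [hsum, list_sum_map_count]
    have : ∀ b, ((substIter σ n b).map w).sum - δ * (substIter σ n b).length
        = Matrix.vecMul (fun c => w c - δ) (((substMatrix σ).map (fun x : ℕ => (x : ℝ))) ^ n) b :=
      fun b => ih b
    simp only [this]
    rw [pow_succ, ← Matrix.vecMul_vecMul]
    rw [Matrix.vecMul]
    simp only [Matrix.vecMul, dotProduct, Matrix.map_apply, substMatrix]
    exact Finset.sum_congr rfl (fun b _ => by ring)

lemma charpoly_conj {m : ℕ} (C D : Matrix (Fin m) (Fin m) ℂ) (hC : IsUnit C.det) :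
    (C * D * C⁻¹).charpoly = D.charpoly := by
  have hCi : C * C⁻¹ = 1 := Matrix.mul_nonsing_inv C hC
  let f : ℂ →+* ℂ[X] := Polynomial.C
  have hmul1 : C.map f * (C⁻¹).map f = 1 := by
    rw [← Matrix.map_mul, hCi, Matrix.map_one f (map_zero f) (map_one f)]
  have hmat : charmatrix (C * D * C⁻¹) = C.map f * charmatrix D * (C⁻¹).map f := by
    unfold charmatrix
    simp only [RingHom.mapMatrix_apply]
    rw [Matrix.mul_sub, Matrix.sub_mul]
    congr 1
    · rw [← ((Matrix.scalar_commute (X : ℂ[X]) (fun r' => Commute.all _ _) (C.map f))).eq,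
        Matrix.mul_assoc, hmul1, Matrix.mul_one]
    · rw [Matrix.map_mul, Matrix.map_mul]
  rw [Matrix.charpoly, Matrix.charpoly, hmat, Matrix.det_mul, Matrix.det_mul]
  have hdet : (C.map f).det * ((C⁻¹).map f).det = 1 := by
    rw [← Matrix.det_mul, hmul1, Matrix.det_one]
  calc (C.map f).det * (charmatrix D).det * ((C⁻¹).map f).det
      = (charmatrix D).det * ((C.map f).det * ((C⁻¹).map f).det) := by ring
    _ = (charmatrix D).det := by rw [hdet, mul_one]

lemma charpoly_isDiag {m : ℕ} (D : Matrix (Fin m) (Fin m) ℂ) (hD : D.IsDiag) :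
    D.charpoly = ∏ i : Fin m, (X - Polynomial.C (D i i)) := by
  have hDdiag : D = Matrix.diagonal (fun i => D i i) := (hD.diagonal_diag).symm
  have hchar : charmatrix D = Matrix.diagonal (fun i => (X : ℂ[X]) - Polynomial.C (D i i)) := by
    ext i j
    by_cases h : i = j
    · subst h; simp
    · rw [charmatrix_apply_ne _ _ _ h, Matrix.diagonal_apply_ne _ h]
      rw [hDdiag, Matrix.diagonal_apply_ne _ h]
      simp
  rw [Matrix.charpoly, hchar, Matrix.det_diagonal]

lemma spectral_bound {m : ℕ} (A : Matrix (Fin m) (Fin m) ℝ)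
    (Cm Dm : Matrix (Fin m) (Fin m) ℂ) (hC : IsUnit Cm.det) (hD : Dm.IsDiag)
    (hA : A.map (fun x : ℝ => (x : ℂ)) = Cm * Dm * Cm⁻¹)
    (lam : ℝ)
    (hsimple : ((A.map (fun x : ℝ => (x : ℂ))).charpoly).rootMultiplicity (lam : ℂ) = 1)
    (cσ : ℝ) (hcσ0 : 0 ≤ cσ)
    (hcσ : ∀ z : ℂ, (A.map (fun x : ℝ => (x : ℂ))).charpoly.IsRoot z → z ≠ (lam : ℂ) →
      ‖z‖ ≤ cσ)
    (q v : Fin m → ℝ) (hv : Matrix.mulVec A v = lam • v) (hvne : v ≠ 0)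
    (hqv : ∑ i, q i * v i = 0) :
    ∃ K : ℝ, 0 ≤ K ∧ ∀ n : ℕ, 1 ≤ n → ∀ a : Fin m,
      |Matrix.vecMul q (A ^ n) a| ≤ K * cσ ^ n := by
  classical
  set d : Fin m → ℂ := fun i => Dm i i with hd
  have hDdiag : Dm = Matrix.diagonal d := (hD.diagonal_diag).symm
  -- charpoly is the product over the diagonal
  have hcp : (A.map (fun x : ℝ => (x : ℂ))).charpoly = ∏ i : Fin m, (X - Polynomial.C (d i)) := by
    rw [hA, charpoly_conj Cm Dm hC, charpoly_isDiag Dm hD]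
  have hmonic : (∏ i : Fin m, (X - Polynomial.C (d i))).Monic :=
    monic_prod_of_monic _ _ (fun i _ => monic_X_sub_C (d i))
  have hroots : (∏ i : Fin m, (X - Polynomial.C (d i))).roots
      = Multiset.map d Finset.univ.val := by
    have := Polynomial.roots_multiset_prod_X_sub_C (Multiset.map d Finset.univ.val)
    rw [← this]
    congr 1
    rw [Multiset.map_map]
    rfl
  -- the unique index i₀ with d i₀ = lam
  have hcount : Multiset.count ((lam : ℂ)) (Multiset.map d Finset.univ.val) = 1 := by
    rw [← hroots, Polynomial.count_roots, ← hcp, hsimple]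
  have hmem : (lam : ℂ) ∈ Multiset.map d Finset.univ.val := by
    rw [← Multiset.count_pos, hcount]; norm_num
  obtain ⟨i₀, _, hi₀⟩ := Multiset.mem_map.1 hmem
  have huniq : ∀ i : Fin m, i ≠ i₀ → d i ≠ (lam : ℂ) := by
    intro i hi hcontra
    have h2 : ({i, i₀} : Finset (Fin m)).val.map d ≤ Multiset.map d Finset.univ.val :=
      Multiset.map_le_map (Finset.val_le_iff.2 (Finset.subset_univ _))
    have hcount2 : Multiset.count ((lam : ℂ)) (({i, i₀} : Finset (Fin m)).val.map d) ≤ 1 := by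
      rw [← hcount]; exact Multiset.count_le_of_le _ h2
    have : ({i, i₀} : Finset (Fin m)).val.map d = {d i, d i₀} := by
      rw [Finset.insert_val, Multiset.ndinsert_of_notMem (by simp [hi]), Multiset.map_cons]
      rfl
    rw [this, hcontra, hi₀] at hcount2
    simp at hcount2
  -- complexification
  set Ac : Matrix (Fin m) (Fin m) ℂ := A.map (fun x : ℝ => (x : ℂ)) with hAc
  set vc : Fin m → ℂ := fun i => (v i : ℂ) with hvc'
  set qc : Fin m → ℂ := fun i => (q i : ℂ) with hqc'
  have hiC : Cm⁻¹ * Cm = 1 := Matrix.nonsing_inv_mul Cm hC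
  have hCi : Cm * Cm⁻¹ = 1 := Matrix.mul_nonsing_inv Cm hC
  have hAvc : Ac.mulVec vc = (lam : ℂ) • vc := by
    funext i
    have hreal := congrFun hv i
    simp only [Matrix.mulVec, dotProduct, Pi.smul_apply, smul_eq_mul] at hreal
    simp only [Matrix.mulVec, dotProduct, hAc, Matrix.map_apply, hvc', Pi.smul_apply,
      smul_eq_mul]
    have : ∑ j, ((A i j : ℂ)) * ((v j : ℂ)) = (((∑ j, A i j * v j : ℝ)) : ℂ) := by
      push_cast; rfl
    rw [this, hreal]
    push_cast; ring
  set y : Fin m → ℂ := Cm⁻¹.mulVec vc with hy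
  have hvcy : Cm.mulVec y = vc := by
    rw [hy, Matrix.mulVec_mulVec, hCi, Matrix.one_mulVec]
  have hDm : Cm⁻¹ * Ac * Cm = Dm := by
    rw [hA]
    calc Cm⁻¹ * (Cm * Dm * Cm⁻¹) * Cm = Cm⁻¹ * Cm * Dm * (Cm⁻¹ * Cm) := by
          simp only [Matrix.mul_assoc]
      _ = Dm := by rw [hiC]; simp [Matrix.mul_assoc, hiC]
  have hDy : Dm.mulVec y = (lam : ℂ) • y := by
    have h1 : Dm.mulVec y = (Cm⁻¹ * Ac).mulVec vc := by
      rw [← hDm, hy, Matrix.mulVec_mulVec]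
      have heq : Cm⁻¹ * Ac * Cm * Cm⁻¹ = Cm⁻¹ * Ac := by
        calc Cm⁻¹ * Ac * Cm * Cm⁻¹ = Cm⁻¹ * Ac * (Cm * Cm⁻¹) := by
              simp only [Matrix.mul_assoc]
          _ = Cm⁻¹ * Ac := by rw [hCi, Matrix.mul_one]
      rw [heq]
    rw [h1, ← Matrix.mulVec_mulVec, hAvc, Matrix.mulVec_smul, hy]
  have hyzero : ∀ i : Fin m, i ≠ i₀ → y i = 0 := by
    intro i hi
    have h2 := congrFun hDy i
    rw [hDdiag, Matrix.mulVec_diagonal] at h2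
    have h3 : (d i - (lam : ℂ)) * y i = 0 := by
      rw [sub_mul]
      simp only [Pi.smul_apply, smul_eq_mul] at h2
      rw [h2]; ring
    rcases mul_eq_zero.1 h3 with h | h
    · exact absurd (sub_eq_zero.1 h) (huniq i hi)
    · exact h
  have hyi₀ : y i₀ ≠ 0 := by
    intro hzero
    have hy0 : y = 0 := by
      funext i
      by_cases h : i = i₀
      · rw [h, hzero]; rfl
      · rw [hyzero i h]; rfl
    have : vc = 0 := by rw [← hvcy, hy0, Matrix.mulVec_zero]
    apply hvne
    funext i
    have := congrFun this i
    simpa [hvc'] using this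
  set s : Fin m → ℂ := Matrix.vecMul qc Cm with hs
  have hsi₀ : s i₀ = 0 := by
    have hdot : dotProduct qc vc = 0 := by
      simp only [dotProduct, hqc', hvc']
      have : ∑ i, ((q i : ℂ)) * ((v i : ℂ)) = (((∑ i, q i * v i : ℝ)) : ℂ) := by
        push_cast; rfl
      rw [this, hqv]; norm_num
    have h4 : dotProduct s y = 0 := by
      rw [hs, ← Matrix.dotProduct_mulVec, hvcy, hdot]
    have h5 : dotProduct s y = s i₀ * y i₀ := by
      rw [dotProduct]
      rw [Finset.sum_eq_single i₀]
      · intro b _ hb; rw [hyzero b hb, mul_zero]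
      · intro hb; exact absurd (Finset.mem_univ i₀) hb
    rw [h5] at h4
    exact (mul_eq_zero.1 h4).resolve_right hyi₀
  -- powers
  have hpow : ∀ n : ℕ, Ac ^ n = Cm * (Matrix.diagonal (fun i => d i ^ n)) * Cm⁻¹ := by
    intro n
    induction n with
    | zero =>
      simp only [pow_zero]
      have : Matrix.diagonal (fun i : Fin m => (1 : ℂ)) = 1 := Matrix.diagonal_one
      simp [this, hCi]
    | succ n ih =>
      rw [pow_succ, ih, hA, hDdiag]
      calc Cm * Matrix.diagonal (fun i => d i ^ n) * Cm⁻¹ * (Cm * Matrix.diagonal d * Cm⁻¹)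
          = Cm * Matrix.diagonal (fun i => d i ^ n) * (Cm⁻¹ * Cm) * Matrix.diagonal d * Cm⁻¹ := by
            simp only [Matrix.mul_assoc]
        _ = Cm * (Matrix.diagonal (fun i => d i ^ n) * Matrix.diagonal d) * Cm⁻¹ := by
            rw [hiC, Matrix.mul_one]; simp only [Matrix.mul_assoc]
        _ = Cm * Matrix.diagonal (fun i => d i ^ (n + 1)) * Cm⁻¹ := by
            rw [Matrix.diagonal_mul_diagonal]
            have heq2 : (fun i => d i ^ n * d i) = fun i => d i ^ (n + 1) := by
              funext i; rw [pow_succ]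
            rw [heq2]
  have hmapA : ∀ n : ℕ, (A ^ n).map (fun x : ℝ => (x : ℂ)) = Ac ^ n := by
    intro n
    induction n with
    | zero =>
      simp only [pow_zero]
      exact Matrix.map_one _ (by norm_num) (by norm_num)
    | succ n ih =>
      rw [pow_succ, pow_succ, ← ih, hAc]
      exact Matrix.map_mul (f := Complex.ofRealHom)
  have hcast : ∀ (n : ℕ) (a : Fin m),
      ((Matrix.vecMul q (A ^ n) a : ℝ) : ℂ) = Matrix.vecMul qc ((Ac) ^ n) a := by
    intro n a
    rw [← hmapA n]
    simp only [Matrix.vecMul, dotProduct, Matrix.map_apply, hqc']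
    push_cast
    rfl
  refine ⟨∑ j, ∑ b, ‖s j‖ * ‖Cm⁻¹ j b‖, ?_, ?_⟩
  · apply Finset.sum_nonneg; intro j _
    apply Finset.sum_nonneg; intro b _
    positivity
  intro n hn a
  have h6 : |Matrix.vecMul q (A ^ n) a| = ‖Matrix.vecMul qc (Ac ^ n) a‖ := by
    rw [← hcast n a, Complex.norm_real, Real.norm_eq_abs]
  rw [h6, hpow n]
  have h7 : Matrix.vecMul qc (Cm * Matrix.diagonal (fun i => d i ^ n) * Cm⁻¹)
      = Matrix.vecMul (Matrix.vecMul s (Matrix.diagonal (fun i => d i ^ n))) Cm⁻¹ := by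
    simp only [hs, Matrix.vecMul_vecMul, Matrix.mul_assoc]
  rw [h7]
  have h8 : Matrix.vecMul (Matrix.vecMul s (Matrix.diagonal (fun i => d i ^ n))) Cm⁻¹ a
      = ∑ j, s j * d j ^ n * Cm⁻¹ j a := by
    rw [Matrix.vecMul]
    simp only [dotProduct, Matrix.vecMul_diagonal]
  rw [h8]
  calc ‖∑ j, s j * d j ^ n * Cm⁻¹ j a‖
      ≤ ∑ j, ‖s j * d j ^ n * Cm⁻¹ j a‖ :=
        norm_sum_le _ _
    _ ≤ ∑ j, ‖s j‖ * ‖Cm⁻¹ j a‖ * cσ ^ n := by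
        apply Finset.sum_le_sum
        intro j _
        rw [norm_mul, norm_mul, norm_pow]
        by_cases hj : j = i₀
        · rw [hj, hsi₀]
          simp only [norm_zero, zero_mul]
          positivity
        · have hdj : ‖d j‖ ≤ cσ := by
            apply hcσ
            · rw [hcp]
              rw [Polynomial.IsRoot, Polynomial.eval_prod]
              apply Finset.prod_eq_zero (Finset.mem_univ j)
              simp
            · exact huniq j hj
          have : ‖d j‖ ^ n ≤ cσ ^ n :=
            pow_le_pow_left₀ (norm_nonneg _) hdj n
          calc ‖s j‖ * ‖d j‖ ^ n * ‖Cm⁻¹ j a‖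
              ≤ ‖s j‖ * cσ ^ n * ‖Cm⁻¹ j a‖ := by
                apply mul_le_mul_of_nonneg_right _ (norm_nonneg _)
                exact mul_le_mul_of_nonneg_left this (norm_nonneg _)
            _ = ‖s j‖ * ‖Cm⁻¹ j a‖ * cσ ^ n := by ring
    _ ≤ (∑ j, ∑ b, ‖s j‖ * ‖Cm⁻¹ j b‖) * cσ ^ n := by
        rw [Finset.sum_mul]
        apply Finset.sum_le_sum
        intro j _
        apply mul_le_mul_of_nonneg_right _ (by positivity)
        apply Finset.single_le_sum (f := fun b => ‖s j‖ * ‖Cm⁻¹ j b‖)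
          (fun b _ => by positivity) (Finset.mem_univ a)

theorem supertile_error_recursion {m : ℕ} (σ : Fin m → List (Fin m))
    (hσ : ∀ i, σ i ≠ [])
    -- the substitution matrix is diagonalizable over `ℂ`
    (hdiag : ∃ (C D : Matrix (Fin m) (Fin m) ℂ), IsUnit C.det ∧ D.IsDiag ∧
      (substMatrix σ).map (fun n => (n : ℂ)) = C * D * C⁻¹)
    (lam : ℝ) (hlam : 1 < lam)
    -- `lam` is a simple eigenvalue of the substitution matrix
    (hsimple : (Matrix.charpoly ((substMatrix σ).map (fun n => (n : ℂ)))).rootMultiplicity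
      ((lam : ℂ)) = 1)
    -- all other eigenvalues have absolute value `< 1`, and `cσ` is their maximal absolute value
    (cσ : ℝ) (hcσ0 : 0 ≤ cσ) (hcσ1 : cσ < 1)
    (hcσ : ∀ z : ℂ, (Matrix.charpoly ((substMatrix σ).map (fun n => (n : ℂ)))).IsRoot z →
      z ≠ (lam : ℂ) → ‖z‖ ≤ cσ)
    -- `w = (ℓ_1,…,ℓ_m)` is a positive left eigenvector
    (w : Fin m → ℝ) (hw : ∀ i, 0 < w i)
    (hweig : Matrix.vecMul w ((substMatrix σ).map (fun n => (n : ℝ))) = lam • w)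
    -- `v` is the positive right eigenvector, normalized
    (v : Fin m → ℝ) (hv : ∀ i, 0 < v i)
    (hveig : Matrix.mulVec ((substMatrix σ).map (fun n => (n : ℝ))) v = lam • v)
    (hvnorm : ∑ i, v i = 1)
    (δ : ℝ) (hδ : δ = ∑ i, w i * v i) :
    ∃ C : ℝ, 0 < C ∧ ∀ k : ℕ, 1 < k → ∀ i : Fin m,
      wordError w δ (substIter σ k i) ≤
        ((List.finRange m).map (fun p => wordError w δ (substIter σ (k - 1) p))).foldr max 0
          + C * cσ ^ (k - 1) := by
  classical
  rcases Nat.eq_zero_or_pos m with hm | hm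
  · subst hm
    exact ⟨1, one_pos, fun k hk i => i.elim0⟩
  set Mr : Matrix (Fin m) (Fin m) ℝ := (substMatrix σ).map (fun n : ℕ => (n : ℝ)) with hMr
  have hmapmap : (substMatrix σ).map (fun n : ℕ => (n : ℂ)) = Mr.map (fun x : ℝ => (x : ℂ)) := by
    rw [hMr, Matrix.map_map]
    congr 1
  obtain ⟨Cm, Dm, hCu, hDd, hA⟩ := hdiag
  rw [hmapmap] at hA hsimple hcσ
  set q : Fin m → ℝ := fun a => w a - δ with hq
  have hqv : ∑ i, q i * v i = 0 := by
    simp only [hq, sub_mul]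
    rw [Finset.sum_sub_distrib, ← hδ, ← Finset.mul_sum, hvnorm, mul_one, sub_self]
  have hvne : v ≠ 0 := by
    intro h
    have h0 := hv ⟨0, hm⟩
    rw [h] at h0
    simp at h0
  obtain ⟨K, hK0, hKb⟩ := spectral_bound Mr Cm Dm hCu hDd hA lam hsimple cσ hcσ0 hcσ
    q v hveig hvne hqv
  set L : ℝ := ∑ i : Fin m, ((σ i).length : ℝ) with hL
  have hL0 : 0 ≤ L := Finset.sum_nonneg fun i _ => by positivity
  refine ⟨L * K + 1, by positivity, ?_⟩
  intro k hk i
  obtain ⟨n, rfl⟩ : ∃ n, k = n + 1 := ⟨k - 1, (Nat.succ_pred_eq_of_pos (by omega)).symm⟩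
  have hn1 : 1 ≤ n := by omega
  simp only [Nat.add_sub_cancel]
  set T : Fin m → List (Fin m) := substIter σ n with hT
  set E : ℝ := ((List.finRange m).map (fun p => wordError w δ (T p))).foldr max 0 with hE
  have hE0 : 0 ≤ E := foldr_max_nonneg _
  have hEmem : ∀ p, wordError w δ (T p) ≤ E :=
    fun p => le_foldr_max (List.mem_map_of_mem (List.mem_finRange p))
  set B : ℝ := K * cσ ^ n with hB'
  have hB0 : 0 ≤ B := mul_nonneg hK0 (pow_nonneg hcσ0 n)
  have hB : ∀ a, |((T a).map w).sum - δ * (T a).length| ≤ B := by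
    intro a
    rw [hT, phi_eq σ w δ n a]
    exact hKb n hn1 a
  have hEj : ∀ a, ∀ j < (T a).length,
      |(((T a).take (j + 1)).map w).sum - (j + 1 : ℕ) * δ| ≤ E :=
    fun a j hj => le_trans (le_wordError w δ (T a) hj) (hEmem a)
  have key := prefix_block_bound w δ T hB0 hE0 hB hEj (σ i)
  have hiter : substIter σ (n + 1) i = (σ i).flatMap T := substIter_succ σ n i
  have hfinal : wordError w δ (substIter σ (n + 1) i) ≤ E + (σ i).length * B := by
    rw [hiter]
    refine wordError_le w δ _ ?_ key
    have : (0:ℝ) ≤ ((σ i).length : ℝ) * B := by positivity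
    linarith
  have hlen : ((σ i).length : ℝ) ≤ L :=
    Finset.single_le_sum (f := fun j : Fin m => ((σ j).length : ℝ))
      (fun j _ => by positivity) (Finset.mem_univ i)
  have hbound : ((σ i).length : ℝ) * B ≤ (L * K + 1) * cσ ^ n := by
    rw [hB']
    have h1 : ((σ i).length : ℝ) * (K * cσ ^ n) = (((σ i).length : ℝ) * K) * cσ ^ n := by ring
    rw [h1]
    apply mul_le_mul_of_nonneg_right _ (pow_nonneg hcσ0 n)
    have h2 : ((σ i).length : ℝ) * K ≤ L * K := mul_le_mul_of_nonneg_right hlen hK0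
    linarith
  calc wordError w δ (substIter σ (n + 1) i) ≤ E + (σ i).length * B := hfinal
    _ ≤ E + (L * K + 1) * cσ ^ n := by linarith
end

section
/- Let σ be the substitution on the two-letter alphabet {1,2} given by σ(1) = 1122 and σ(2) = 12, with tile lengths ℓ_1 = 2 and ℓ_2 = 1. Let u : ℕ → {1,2} be a one-sided fixed point of σ and define x_j = Σ_{t<j} ℓ_{u_t}. Then sup_{j ∈ ℕ} |x_j − (3/2)·j| < ∞; in particular the point set {x_j : j ∈ ℕ} is bounded distance equivalent to the set {(3/2)·j : j ∈ ℕ}. -/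
/-- `u : ℕ → Fin m` is a one-sided fixed point of `σ`: for every `n`, the concatenation
`σ(u_0)σ(u_1)⋯σ(u_{n-1})` is an initial segment of `u`. -/
def IsFixedPoint {m : ℕ} (σ : Fin m → List (Fin m)) (u : ℕ → Fin m) : Prop :=
  ∀ n : ℕ, ∀ j : ℕ, (hj : j < ((List.range n).flatMap (fun t => σ (u t))).length) →
    ((List.range n).flatMap (fun t => σ (u t))).get ⟨j, hj⟩ = u j

/-- Bounded distance equivalence of point sets in `ℝ`. -/
def BDE (Λ Λ' : Set ℝ) : Prop :=
  ∃ c : ℝ, 0 < c ∧ ∃ φ : Λ ≃ Λ', ∀ x : Λ, |(x : ℝ) - (φ x : ℝ)| < c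

theorem aabbab_bounded_distance
    -- the substitution `1 ↦ 1122`, `2 ↦ 12` on the two-letter alphabet `{1, 2}`
    (σ : Fin 2 → List (Fin 2)) (hσ1 : σ 0 = [0, 0, 1, 1]) (hσ2 : σ 1 = [0, 1])
    -- the tile lengths `ℓ_1 = 2`, `ℓ_2 = 1`
    (ℓ : Fin 2 → ℝ) (hℓ1 : ℓ 0 = 2) (hℓ2 : ℓ 1 = 1)
    -- `u` is a one-sided fixed point of `σ`, and `x_j = Σ_{t<j} ℓ_{u_t}`
    (u : ℕ → Fin 2) (hu : IsFixedPoint σ u)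
    (x : ℕ → ℝ) (hx : ∀ j, x j = ∑ t ∈ Finset.range j, ℓ (u t)) :
    (∃ C : ℝ, ∀ j : ℕ, |x j - (3 / 2) * j| ≤ C) ∧
      BDE (Set.range x) (Set.range fun j : ℕ => (3 / 2 : ℝ) * j) := by
  have hcases : ∀ a : Fin 2, a = 0 ∨ a = 1 := by decide
  set M : ℕ → ℕ := fun n => ((List.range n).flatMap (fun t => σ (u t))).length with hM
  have hMs : ∀ n, M (n + 1) = M n + (σ (u n)).length := by
    intro n
    simp [hM, List.range_succ]
  have hMge : ∀ n, n ≤ M n := by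
    intro n
    induction n with
    | zero => exact Nat.zero_le _
    | succ n ih =>
      have h2 : 2 ≤ (σ (u n)).length := by
        rcases hcases (u n) with h | h <;> simp [h, hσ1, hσ2]
      rw [hMs]; omega
  have hMle : ∀ n, (σ (u n)).length ≤ 4 := by
    intro n
    rcases hcases (u n) with h | h <;> simp [h, hσ1, hσ2]
  have hget : ∀ n, ∀ i, (hi : i < (σ (u n)).length) → u (M n + i) = (σ (u n)).get ⟨i, hi⟩ := by
    intro n i hi
    have hlt : M n + i < ((List.range (n + 1)).flatMap (fun t => σ (u t))).length := by
      have := hMs n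
      simp only [hM] at this ⊢
      omega
    have h1 := hu (n + 1) (M n + i) hlt
    rw [← h1]
    simp only [List.get_eq_getElem, List.range_succ, List.flatMap_append, List.flatMap_cons,
      List.flatMap_nil, List.append_nil]
    rw [List.getElem_append_right (by simp [hM] : (((List.range n).flatMap (fun t => σ (u t)))).length ≤ M n + i)]
    congr 1
    simp [hM]
  -- splitting sums
  have hsplit : ∀ a b : ℕ, x (a + b) = x a + ∑ i ∈ Finset.range b, ℓ (u (a + i)) := by
    intro a b
    induction b with
    | zero => simp
    | succ b ih =>
      rw [show a + (b + 1) = (a + b) + 1 from rfl, hx, Finset.sum_range_succ, ← hx, ih,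
        Finset.sum_range_succ]
      ring
  -- x at block boundaries equals 3/2 times the boundary
  have key : ∀ n, x (M n) = (3 / 2) * (M n : ℝ) := by
    intro n
    induction n with
    | zero => simp [hM, hx]
    | succ n ih =>
      rcases hcases (u n) with h | h
      · have hlen : (σ (u n)).length = 4 := by simp [h, hσ1]
        have e0 : u (M n + 0) = 0 := by rw [hget n 0 (by omega)]; simp [h, hσ1]
        have e1 : u (M n + 1) = 0 := by rw [hget n 1 (by omega)]; simp [h, hσ1]
        have e2 : u (M n + 2) = 1 := by rw [hget n 2 (by omega)]; simp [h, hσ1]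
        have e3 : u (M n + 3) = 1 := by rw [hget n 3 (by omega)]; simp [h, hσ1]
        rw [hMs, hlen, hsplit]
        simp only [Finset.sum_range_succ, Finset.sum_range_zero]
        rw [e0, e1, e2, e3, hℓ1, hℓ2, ih]
        push_cast
        ring
      · have hlen : (σ (u n)).length = 2 := by simp [h, hσ2]
        have e0 : u (M n + 0) = 0 := by rw [hget n 0 (by omega)]; simp [h, hσ2]
        have e1 : u (M n + 1) = 1 := by rw [hget n 1 (by omega)]; simp [h, hσ2]
        rw [hMs, hlen, hsplit]
        simp only [Finset.sum_range_succ, Finset.sum_range_zero]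
        rw [e0, e1, hℓ1, hℓ2, ih]
        push_cast
        ring
  -- difference bound between consecutive indices
  have hdiff : ∀ a b : ℕ, a ≤ b →
      |(x b - (3 / 2) * b) - (x a - (3 / 2) * a)| ≤ (1 / 2) * ((b : ℝ) - a) := by
    intro a b hab
    have hsum : x b - x a = ∑ t ∈ Finset.Ico a b, ℓ (u t) := by
      rw [hx, hx, Finset.sum_Ico_eq_sub _ hab]
    have : (x b - (3 / 2) * b) - (x a - (3 / 2) * a)
        = ∑ t ∈ Finset.Ico a b, (ℓ (u t) - 3 / 2) := by
      rw [Finset.sum_sub_distrib, ← hsum, Finset.sum_const, Nat.card_Ico, nsmul_eq_mul,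
        Nat.cast_sub hab]
      ring
    rw [this]
    calc |∑ t ∈ Finset.Ico a b, (ℓ (u t) - 3 / 2)|
        ≤ ∑ t ∈ Finset.Ico a b, |ℓ (u t) - 3 / 2| := Finset.abs_sum_le_sum_abs _ _
      _ ≤ ∑ _t ∈ Finset.Ico a b, (1 / 2 : ℝ) := by
          apply Finset.sum_le_sum
          intro t _
          rcases hcases (u t) with h | h <;> rw [h] <;> norm_num [hℓ1, hℓ2, abs_le]
      _ = (1 / 2) * ((b : ℝ) - a) := by
          rw [Finset.sum_const, Nat.card_Ico, nsmul_eq_mul, Nat.cast_sub hab]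
          ring
  -- main bound
  have main : ∀ j : ℕ, |x j - (3 / 2) * j| ≤ 3 / 2 := by
    intro j
    have hex : ∃ k, j < M k := ⟨j + 1, lt_of_lt_of_le (Nat.lt_succ_self j) (hMge (j + 1))⟩
    classical
    have hk0 : Nat.find hex ≠ 0 := by
      intro h0
      have hkspec : j < M (Nat.find hex) := Nat.find_spec hex
      rw [h0] at hkspec
      simp [hM] at hkspec
    set n := Nat.find hex - 1 with hn
    have hkspec : j < M (n + 1) := by
      have h1 := Nat.find_spec hex
      rwa [show n + 1 = Nat.find hex by omega]
    have hle : M n ≤ j := by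
      have := Nat.find_min hex (show n < Nat.find hex by omega)
      omega
    have hjb : j - M n ≤ 3 := by
      have := hMs n
      have := hMle n
      omega
    have hd := hdiff (M n) j hle
    rw [key n, sub_self, sub_zero] at hd
    have hcast : ((j : ℝ) - (M n : ℝ)) ≤ 3 := by
      have : (j : ℝ) ≤ (M n : ℝ) + 3 := by
        have h3 : j ≤ M n + 3 := by omega
        exact_mod_cast h3
      linarith
    linarith [hd]
  constructor
  · exact ⟨3 / 2, main⟩
  · -- BDE part
    have hxmono : StrictMono x := by
      apply strictMono_nat_of_lt_succ
      intro n
      rw [hx, hx, Finset.sum_range_succ]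
      have : (1 : ℝ) ≤ ℓ (u n) := by
        rcases hcases (u n) with h | h <;> simp [h, hℓ1, hℓ2]
      linarith
    have hgmono : StrictMono (fun j : ℕ => (3 / 2 : ℝ) * j) := by
      intro a b hab
      have : (a : ℝ) < b := by exact_mod_cast hab
      dsimp only
      linarith
    refine ⟨2, by norm_num, ⟨(Equiv.ofInjective x hxmono.injective).symm.trans
      (Equiv.ofInjective _ hgmono.injective), ?_⟩⟩
    intro a
    set j := (Equiv.ofInjective x hxmono.injective).symm a with hj
    have h1 : x j = (a : ℝ) := Equiv.apply_ofInjective_symm hxmono.injective a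
    have h2 : ((((Equiv.ofInjective x hxmono.injective).symm.trans
        (Equiv.ofInjective _ hgmono.injective)) a : Set.range fun j : ℕ => (3 / 2 : ℝ) * j) : ℝ)
        = (3 / 2 : ℝ) * j := by
      simp [Equiv.trans_apply, ← hj]
    rw [h2, ← h1]
    have := main j
    calc |x j - (3 / 2 : ℝ) * j| ≤ 3 / 2 := this
      _ < 2 := by norm_num
end

section
/- Let σ be a primitive substitution on {1,…,m} with substitution matrix M_σ, let λ be its Perron–Frobenius eigenvalue, and let v = (v_1,…,v_m) be the positive right eigenvector of M_σ for λ normalized so its entries sum to 1. Let u : ℕ → {1,…,m} be a one-sided fixed point of σ. Then for each letter i, the relative frequency lim_{n→∞} (#{k < n : u_k = i})/n exists and equals v_i. -/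
open Matrix Filter

section Aux

variable {m : ℕ}

variable (σ : Fin m → List (Fin m))

/-- the word `σ^k(a)` -/
def iterWord : ℕ → Fin m → List (Fin m)
  | 0, a => [a]
  | (k+1), a => (σ a).flatMap (iterWord k)

lemma count_flatMap {γ : Type*} (i : Fin m) (l : List γ) (f : γ → List (Fin m)) :
    (l.flatMap f).count i = (l.map (fun a => (f a).count i)).sum := by
  induction l with
  | nil => simp
  | cons b t ih => simp [List.flatMap_cons, List.count_append, ih]

lemma sum_over_list (l : List (Fin m)) (g : Fin m → ℕ) :
    (l.map g).sum = ∑ j : Fin m, l.count j * g j := by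
  induction l with
  | nil => simp
  | cons b t ih =>
    simp only [List.map_cons, List.sum_cons, ih, List.count_cons, add_mul]
    rw [Finset.sum_add_distrib, add_comm]
    congr 1
    rw [Finset.sum_eq_single b]
    · simp
    · intro c _ hc
      simp [Ne.symm hc]
    · simp

lemma count_iterWord (k : ℕ) (a i : Fin m) :
    (iterWord σ k a).count i = ((substMatrix σ) ^ k) i a := by
  induction k generalizing a with
  | zero =>
    simp only [iterWord, pow_zero, Matrix.one_apply, List.count_singleton', beq_iff_eq]
    rcases eq_or_ne a i with h | h
    · simp [h]
    · rw [if_neg h, if_neg (Ne.symm h)]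
  | succ k ih =>
    rw [iterWord, count_flatMap]
    have : (fun b => (iterWord σ k b).count i) = fun b => ((substMatrix σ)^k) i b := by
      funext b; exact ih b
    rw [this, sum_over_list, pow_succ, Matrix.mul_apply]
    simp [substMatrix, mul_comm]

lemma length_iterWord (k : ℕ) (a : Fin m) :
    (iterWord σ k a).length = ∑ i : Fin m, ((substMatrix σ) ^ k) i a := by
  have : (iterWord σ k a).length = ∑ i : Fin m, (iterWord σ k a).count i := by
    induction (iterWord σ k a) with
    | nil => simp
    | cons b t ih =>
      simp only [List.length_cons, List.count_cons, ih, beq_iff_eq]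
      rw [Finset.sum_add_distrib]
      congr 1
      rw [Finset.sum_eq_single b]
      · simp [add_comm]
      · intro c _ hc
        simp [Ne.symm hc]
      · simp
  rw [this]; simp [count_iterWord]

lemma iterWord_pos (hσ : ∀ i, σ i ≠ []) (k : ℕ) (a : Fin m) : 0 < (iterWord σ k a).length := by
  induction k generalizing a with
  | zero => simp [iterWord]
  | succ k ih =>
    obtain ⟨b, t, hbt⟩ := List.exists_cons_of_ne_nil (hσ a)
    rw [iterWord, hbt, List.flatMap_cons, List.length_append]
    exact lt_of_lt_of_le (ih b) (Nat.le_add_right _ _)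

variable (u : ℕ → Fin m)


/-- the word `σ^k(u_0)⋯σ^k(u_{n-1})` -/
def blockWord (k n : ℕ) : List (Fin m) := (List.range n).flatMap (fun t => iterWord σ k (u t))

lemma blockWord_prefix (hu : IsFixedPoint σ u) (k n : ℕ) :
    ∀ j : ℕ, (hj : j < (blockWord σ u k n).length) → (blockWord σ u k n).get ⟨j, hj⟩ = u j := by
  induction k generalizing n with
  | zero =>
    have h1 : blockWord σ u 0 n = (List.range n).map u := by
      show (List.range n).flatMap (fun t => [u t]) = _
      rw [← List.flatMap_singleton' ((List.range n).map u), List.flatMap_map]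
    intro j hj
    have hj' : j < ((List.range n).map u).length := h1 ▸ hj
    simp only [List.get_eq_getElem, List.getElem_of_eq h1]
    simp
  | succ k ih =>
    have h2 : blockWord σ u (k+1) n
        = blockWord σ u k ((List.range n).flatMap (fun t => σ (u t))).length := by
      show (List.range n).flatMap (fun t => (σ (u t)).flatMap (iterWord σ k)) = _
      set W := (List.range n).flatMap (fun t => σ (u t)) with hW
      have hWeq : W = (List.range W.length).map u := by
        apply List.ext_get
        · simp
        · intro j h1 h2
          simp only [List.get_eq_getElem] at *
          rw [List.getElem_map, List.getElem_range]
          exact hu n j h1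
      calc (List.range n).flatMap (fun t => (σ (u t)).flatMap (iterWord σ k))
          = W.flatMap (iterWord σ k) := List.flatMap_assoc.symm
        _ = ((List.range W.length).map u).flatMap (iterWord σ k) := by rw [← hWeq]
        _ = blockWord σ u k W.length := List.flatMap_map _ _ _
    rw [h2]
    exact ih _


variable {m : ℕ}

lemma pf_ratio (M : Matrix (Fin m) (Fin m) ℝ)
    (hM0 : ∀ i j, 0 ≤ M i j)
    (K : ℕ) (hK : ∀ i j, 1 ≤ (M ^ K) i j)
    (lam : ℝ) (hlam : 0 < lam)
    (v : Fin m → ℝ) (hv : ∀ i, 0 < v i)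
    (hveig : ∀ i, ∑ j, M i j * v j = lam * v i)
    (hvnorm : ∑ i, v i = 1)
    (i a : Fin m) :
    Tendsto (fun k : ℕ => (M ^ k) i a / ∑ i', (M ^ k) i' a) atTop (nhds (v i)) := by
  haveI : Nonempty (Fin m) := ⟨a⟩
  have hU : (Finset.univ : Finset (Fin m)).Nonempty := Finset.univ_nonempty
  -- nonnegativity of powers
  have hMk0 : ∀ k i j, 0 ≤ (M ^ k) i j := by
    intro k
    induction k with
    | zero => intro i j; rcases eq_or_ne i j with h|h <;> simp [Matrix.one_apply, h]
    | succ k ih =>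
      intro i j
      rw [pow_succ, Matrix.mul_apply]
      exact Finset.sum_nonneg fun j' _ => mul_nonneg (ih i j') (hM0 j' j)
  -- eigenvector for powers
  have heig : ∀ n i, ∑ j, (M ^ n) i j * v j = lam ^ n * v i := by
    intro n
    induction n with
    | zero => intro i; rcases eq_or_ne i i with h|h <;> simp [Matrix.one_apply]
    | succ n ih =>
      intro i
      have : ∀ j, (M ^ (n+1)) i j = ∑ j', M i j' * (M ^ n) j' j := by
        intro j; rw [pow_succ', Matrix.mul_apply]
      simp only [this, Finset.sum_mul]
      rw [Finset.sum_comm]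
      have : ∀ j', ∑ j, M i j' * (M ^ n) j' j * v j = M i j' * (lam ^ n * v j') := by
        intro j'
        rw [← ih j', Finset.mul_sum]
        congr 1; funext j; ring
      simp only [this]
      have : ∀ j', M i j' * (lam ^ n * v j') = lam ^ n * (M i j' * v j') := by intro j'; ring
      simp only [this, ← Finset.mul_sum, hveig i]
      ring
  set x : ℕ → Fin m → ℝ := fun k j => (M ^ k) j a / lam ^ k with hxdef
  have hlamk : ∀ k : ℕ, (0:ℝ) < lam ^ k := fun k => pow_pos hlam k
  have hxrec : ∀ n k j, x (n + k) j = (∑ j', (M ^ n) j j' * x k j') / lam ^ n := by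
    intro n k j
    have h1 : (M ^ (n + k)) j a = ∑ j', (M ^ n) j j' * (M ^ k) j' a := by
      rw [pow_add, Matrix.mul_apply]
    simp only [hxdef, h1, pow_add, Finset.sum_div]
    exact Finset.sum_congr rfl fun j' _ => by ring
  set α : ℕ → ℝ := fun k => Finset.univ.inf' hU (fun j => x k j / v j) with hαdef
  set β : ℕ → ℝ := fun k => Finset.univ.sup' hU (fun j => x k j / v j) with hβdef
  have hαle : ∀ k j, α k * v j ≤ x k j := by
    intro k j
    have := Finset.inf'_le (f := fun j => x k j / v j) (Finset.mem_univ j)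
    calc α k * v j ≤ (x k j / v j) * v j := by
          exact mul_le_mul_of_nonneg_right this (le_of_lt (hv j))
      _ = x k j := div_mul_cancel₀ _ (ne_of_gt (hv j))
  have hβge : ∀ k j, x k j ≤ β k * v j := by
    intro k j
    have := Finset.le_sup' (f := fun j => x k j / v j) (Finset.mem_univ j)
    calc x k j = (x k j / v j) * v j := (div_mul_cancel₀ _ (ne_of_gt (hv j))).symm
      _ ≤ β k * v j := mul_le_mul_of_nonneg_right this (le_of_lt (hv j))
  -- preservation of lower/upper bounds
  have hlow : ∀ n k (c : ℝ), (∀ j, c * v j ≤ x k j) → ∀ j, c * v j ≤ x (n + k) j := by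
    intro n k c hc j
    rw [hxrec n k j, le_div_iff₀ (hlamk n)]
    calc c * v j * lam ^ n = c * (lam ^ n * v j) := by ring
      _ = c * ∑ j', (M ^ n) j j' * v j' := by rw [heig]
      _ = ∑ j', (M ^ n) j j' * (c * v j') := by rw [Finset.mul_sum]; congr 1; funext j'; ring
      _ ≤ ∑ j', (M ^ n) j j' * x k j' :=
          Finset.sum_le_sum fun j' _ => mul_le_mul_of_nonneg_left (hc j') (hMk0 n j j')
  have hhigh : ∀ n k (c : ℝ), (∀ j, x k j ≤ c * v j) → ∀ j, x (n + k) j ≤ c * v j := by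
    intro n k c hc j
    rw [hxrec n k j, div_le_iff₀ (hlamk n)]
    calc ∑ j', (M ^ n) j j' * x k j'
        ≤ ∑ j', (M ^ n) j j' * (c * v j') :=
          Finset.sum_le_sum fun j' _ => mul_le_mul_of_nonneg_left (hc j') (hMk0 n j j')
      _ = c * ∑ j', (M ^ n) j j' * v j' := by rw [Finset.mul_sum]; congr 1; funext j'; ring
      _ = c * v j * lam ^ n := by rw [heig]; ring
  have hαmono : Monotone α := by
    apply monotone_nat_of_le_succ
    intro k
    apply Finset.le_inf'
    intro j _
    rw [le_div_iff₀ (hv j)]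
    have := hlow 1 k (α k) (hαle k) j
    simpa [Nat.add_comm] using this
  have hβanti : Antitone β := by
    apply antitone_nat_of_succ_le
    intro k
    apply Finset.sup'_le
    intro j _
    rw [div_le_iff₀ (hv j)]
    have := hhigh 1 k (β k) (hβge k) j
    simpa [Nat.add_comm] using this
  have hαβ : ∀ k, α k ≤ β k := by
    intro k
    exact le_trans (Finset.inf'_le _ (Finset.mem_univ a)) (Finset.le_sup' (f := fun j => x k j / v j) (Finset.mem_univ a))
  -- quantities for the contraction estimate
  set vmin := Finset.univ.inf' hU v with hvmindef
  set vmax := Finset.univ.sup' hU v with hvmaxdef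
  have hvmin : 0 < vmin := by
    rw [hvmindef, Finset.lt_inf'_iff]
    exact fun j _ => hv j
  have hvmax : ∀ j, v j ≤ vmax := fun j => Finset.le_sup' _ (Finset.mem_univ j)
  have hvmaxpos : 0 < vmax := lt_of_lt_of_le (hv (Classical.arbitrary _)) (hvmax _)
  set δ := vmin / (lam ^ K * vmax) with hδdef
  have hδ : 0 < δ := div_pos hvmin (mul_pos (hlamk K) hvmaxpos)
  have hβαnn : ∀ k, 0 ≤ β k - α k := fun k => sub_nonneg.2 (hαβ k)
  have hvminle : ∀ j, vmin ≤ v j := fun j => Finset.inf'_le _ (Finset.mem_univ j)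
  have hgap : ∀ k, α k + (β k - α k) * δ ≤ α (K + k) := by
    intro k
    obtain ⟨js, _, hjs⟩ := Finset.exists_mem_eq_sup' hU (fun j => x k j / v j)
    have hxjs : β k * v js ≤ x k js := by
      rw [show β k = x k js / v js from hjs, div_mul_cancel₀ _ (ne_of_gt (hv js))]
    have key : ∀ j, α k * (lam ^ K * v j) + (β k - α k) * vmin
        ≤ ∑ j', (M ^ K) j j' * x k j' := by
      intro j
      have step1 : ∑ j', (M ^ K) j j' * (α k * v j' + (if j' = js then (β k - α k) * v js else 0))
          ≤ ∑ j', (M ^ K) j j' * x k j' := by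
        apply Finset.sum_le_sum
        intro j' _
        apply mul_le_mul_of_nonneg_left _ (hMk0 K j j')
        rcases eq_or_ne j' js with h | h
        · subst h
          rw [if_pos rfl]
          have : α k * v j' + (β k - α k) * v j' = β k * v j' := by ring
          rw [this]
          exact hxjs
        · rw [if_neg h, add_zero]
          exact hαle k j'
      have step2 : ∑ j', (M ^ K) j j' * (α k * v j' + (if j' = js then (β k - α k) * v js else 0))
          = α k * (lam ^ K * v j) + (M ^ K) j js * ((β k - α k) * v js) := by
        rw [Finset.sum_congr rfl (fun j' _ => mul_add ((M ^ K) j j') _ _), Finset.sum_add_distrib]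
        congr 1
        · rw [← heig K j, Finset.mul_sum]
          exact Finset.sum_congr rfl fun j' _ => by ring
        · simp only [mul_ite, mul_zero]
          rw [Finset.sum_ite_eq']
          simp
      have step3 : (β k - α k) * vmin ≤ (M ^ K) j js * ((β k - α k) * v js) := by
        calc (β k - α k) * vmin = 1 * ((β k - α k) * vmin) := (one_mul _).symm
          _ ≤ (M ^ K) j js * ((β k - α k) * v js) := by
              apply mul_le_mul (hK j js) (mul_le_mul_of_nonneg_left (hvminle js) (hβαnn k))
                (mul_nonneg (hβαnn k) (le_of_lt hvmin)) (le_trans zero_le_one (hK j js))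
      rw [step2] at step1
      linarith [step1, step3]
    apply Finset.le_inf'
    intro j _
    rw [le_div_iff₀ (hv j), hxrec K k j, le_div_iff₀ (hlamk K)]
    have hch : (α k + (β k - α k) * δ) * v j * lam ^ K
        ≤ α k * (lam ^ K * v j) + (β k - α k) * vmin := by
      have h0 : δ * (v j * lam ^ K) ≤ vmin := by
        rw [hδdef, div_mul_eq_mul_div, div_le_iff₀ (mul_pos (hlamk K) hvmaxpos)]
        nlinarith [mul_le_mul_of_nonneg_right
          (mul_le_mul_of_nonneg_left (hvmax j) hvmin.le) (hlamk K).le]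
      nlinarith [h0, hβαnn k]
    exact le_trans hch (key j)
  -- limits
  have hbddA : BddAbove (Set.range α) := by
    refine ⟨β 0, ?_⟩
    rintro _ ⟨k, rfl⟩
    exact le_trans (hαβ k) (hβanti (Nat.zero_le k))
  have hbddB : BddBelow (Set.range β) := by
    refine ⟨α 0, ?_⟩
    rintro _ ⟨k, rfl⟩
    exact le_trans (hαmono (Nat.zero_le k)) (hαβ k)
  set A := ⨆ k, α k with hAdef
  set B := ⨅ k, β k with hBdef
  have hA : Tendsto α atTop (nhds A) := tendsto_atTop_ciSup hαmono hbddA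
  have hB : Tendsto β atTop (nhds B) := tendsto_atTop_ciInf hβanti hbddB
  have hAB : A ≤ B := by
    apply ciSup_le
    intro k
    apply le_ciInf
    intro j
    exact le_trans (hαmono (le_max_left k j))
      (le_trans (hαβ _) (hβanti (le_max_right k j)))
  have hBA : B ≤ A := by
    have h1 : Tendsto (fun k => α (K + k)) atTop (nhds A) := by
      have := hA.comp (tendsto_add_atTop_nat K)
      simpa [Function.comp_def, Nat.add_comm] using this
    have h2 : Tendsto (fun k => α k + (β k - α k) * δ) atTop (nhds (A + (B - A) * δ)) :=
      hA.add ((hB.sub hA).mul_const δ)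
    have hle : A + (B - A) * δ ≤ A := le_of_tendsto_of_tendsto' h2 h1 fun k => hgap k
    nlinarith [hδ]
  have hABeq : B = A := le_antisymm hBA hAB
  have hc : 0 < A := by
    have h1 : 0 < α K := by
      rw [hαdef]
      rw [Finset.lt_inf'_iff]
      intro j _
      exact div_pos (div_pos (lt_of_lt_of_le one_pos (hK j a)) (hlamk K)) (hv j)
    exact lt_of_lt_of_le h1 (le_ciSup hbddA K)
  have hxlim : ∀ j, Tendsto (fun k => x k j) atTop (nhds (A * v j)) := by
    intro j
    have h1 : Tendsto (fun k => α k * v j) atTop (nhds (A * v j)) := hA.mul_const _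
    have h2 : Tendsto (fun k => β k * v j) atTop (nhds (A * v j)) := by
      rw [← hABeq]; exact hB.mul_const _
    exact tendsto_of_tendsto_of_tendsto_of_le_of_le h1 h2 (fun k => hαle k j) (fun k => hβge k j)
  have hslim : Tendsto (fun k => ∑ j, x k j) atTop (nhds A) := by
    have h1 : Tendsto (fun k => ∑ j, x k j) atTop (nhds (∑ j, A * v j)) :=
      tendsto_finset_sum Finset.univ (fun j _ => hxlim j)
    rwa [← Finset.mul_sum, hvnorm, mul_one] at h1
  have hfinal : Tendsto (fun k => x k i / ∑ j, x k j) atTop (nhds (v i)) := by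
    have h1 := (hxlim i).div hslim (ne_of_gt hc)
    rwa [mul_comm, mul_div_assoc, div_self (ne_of_gt hc), mul_one] at h1
  apply hfinal.congr
  intro k
  have hs : ∑ j, x k j = (∑ j, (M ^ k) j a) / lam ^ k := by
    rw [hxdef, Finset.sum_div]
  rw [hxdef, hs]
  rw [div_div_div_cancel_right₀]
  exact (hlamk k).ne'

lemma card_filter_eq_count (u : ℕ → Fin m) (i : Fin m) (n : ℕ) :
    ((Finset.range n).filter (fun t => u t = i)).card = ((List.range n).map u).count i := by
  induction n with
  | zero => simp
  | succ n ih =>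
    rw [Finset.range_add_one, Finset.filter_insert, List.range_succ, List.map_append,
      List.count_append]
    rcases eq_or_ne (u n) i with h | h
    · rw [if_pos h, Finset.card_insert_of_notMem (by simp), ih]
      simp [h]
    · rw [if_neg h, ih]
      simp [List.count_singleton', h]

lemma cast_pow_entry (A : Matrix (Fin m) (Fin m) ℕ) (k : ℕ) (i j : Fin m) :
    ((A.map (fun n => (n : ℝ))) ^ k) i j = ((A ^ k) i j : ℝ) := by
  have h : (A.map (fun n => (n : ℝ))) ^ k = (A ^ k).map (fun n => (n : ℝ)) := by
    have h := map_pow ((Nat.castRingHom ℝ).mapMatrix) A k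
    simpa [RingHom.mapMatrix_apply] using h.symm
  rw [h]; rfl

end Aux

theorem letter_frequencies {m : ℕ} (σ : Fin m → List (Fin m))
    (hσ : ∀ i, σ i ≠ [])
    -- `σ` is primitive
    (hprim : ∃ k : ℕ, ∀ i j : Fin m, 0 < ((substMatrix σ) ^ k) i j)
    -- `lam` is the Perron–Frobenius eigenvalue: positive, with a positive
    -- eigenvector, and strictly dominating in absolute value all other eigenvalues
    (lam : ℝ) (hlampos : 0 < lam)
    (hdom : ∀ z : ℂ, (Matrix.charpoly ((substMatrix σ).map (fun n => (n : ℂ)))).IsRoot z →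
      z ≠ (lam : ℂ) → ‖z‖ < lam)
    -- `v` is the positive right eigenvector of `M_σ` for `lam`, normalized
    (v : Fin m → ℝ) (hv : ∀ i, 0 < v i)
    (hveig : Matrix.mulVec ((substMatrix σ).map (fun n => (n : ℝ))) v = lam • v)
    (hvnorm : ∑ i, v i = 1)
    -- `u` is a one-sided fixed point of `σ`
    (u : ℕ → Fin m) (hu : IsFixedPoint σ u) :
    ∀ i : Fin m,
      Tendsto (fun n : ℕ => (((Finset.range n).filter (fun k => u k = i)).card : ℝ) / n)
        atTop (nhds (v i)) := by
  intro i
  haveI : Nonempty (Fin m) := ⟨i⟩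
  set Mn := substMatrix σ with hMndef
  -- ratio convergence from the PF contraction lemma
  have hratio : ∀ i' a : Fin m, Tendsto
      (fun k : ℕ => ((Mn ^ k) i' a : ℝ) / ∑ j, ((Mn ^ k) j a : ℝ)) atTop (nhds (v i')) := by
    obtain ⟨K, hKpos⟩ := hprim
    intro i' a
    have h := pf_ratio (Mn.map (fun n => (n : ℝ)))
      (fun i'' j => by simp [Matrix.map_apply])
      K
      (fun i'' j => by
        rw [cast_pow_entry]
        exact_mod_cast hKpos i'' j)
      lam hlampos v hv
      (fun i'' => by
        have h := congrFun hveig i''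
        simpa [Matrix.mulVec, dotProduct, Pi.smul_apply, smul_eq_mul] using h)
      hvnorm i' a
    simpa only [cast_pow_entry] using h
  rw [Metric.tendsto_atTop]
  intro ε hε
  -- choose `k` with all block ratios within ε/4 of `v`
  have huni : ∀ᶠ k : ℕ in atTop, ∀ pr : Fin m × Fin m,
      |((Mn ^ k) pr.1 pr.2 : ℝ) / ∑ j, ((Mn ^ k) j pr.2 : ℝ) - v pr.1| ≤ ε / 4 := by
    rw [eventually_all]
    intro pr
    obtain ⟨N, hN⟩ := Metric.tendsto_atTop.mp (hratio pr.1 pr.2) (ε / 4) (by positivity)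
    refine eventually_atTop.2 ⟨N, fun k hk => ?_⟩
    have h := hN k hk
    rw [Real.dist_eq] at h
    exact h.le
  obtain ⟨k, hk⟩ := huni.exists
  have hlen : ∀ a : Fin m, ((iterWord σ k a).length : ℝ) = ∑ j, ((Mn ^ k) j a : ℝ) := by
    intro a
    rw [length_iterWord]
    push_cast
    rfl
  have hlenpos : ∀ a : Fin m, 0 < (iterWord σ k a).length := iterWord_pos σ hσ k
  have hblock : ∀ a : Fin m, |((Mn ^ k) i a : ℝ) - v i * (iterWord σ k a).length|
      ≤ ε / 4 * (iterWord σ k a).length := by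
    intro a
    have h1 := hk (i, a)
    simp only at h1
    rw [← hlen a] at h1
    have hL : (0 : ℝ) < ((iterWord σ k a).length : ℝ) := by exact_mod_cast hlenpos a
    have h2 : ((Mn ^ k) i a : ℝ) - v i * (iterWord σ k a).length
        = (((Mn ^ k) i a : ℝ) / (iterWord σ k a).length - v i) * (iterWord σ k a).length := by
      field_simp
    rw [h2, abs_mul, abs_of_pos hL]
    exact mul_le_mul_of_nonneg_right h1 hL.le
  set Lk := Finset.univ.sup (fun a : Fin m => (iterWord σ k a).length) with hLkdef
  have hLk : ∀ a, (iterWord σ k a).length ≤ Lk := fun a => Finset.le_sup (f := fun a : Fin m => (iterWord σ k a).length) (Finset.mem_univ a)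
  refine ⟨⌈(4 * Lk : ℝ) / ε⌉₊ + 1, fun n hn => ?_⟩
  have hn1 : 1 ≤ n := le_trans (Nat.le_add_left 1 _) hn
  have hnR : (0 : ℝ) < n := by exact_mod_cast hn1
  have hnLk : (4 * (Lk : ℝ)) / ε < n := by
    calc (4 * (Lk : ℝ)) / ε ≤ ⌈(4 * Lk : ℝ) / ε⌉₊ := Nat.le_ceil _
      _ < n := by exact_mod_cast Nat.lt_of_lt_of_le (Nat.lt_succ_self _) hn
  have h4Lk : 4 * (Lk : ℝ) < ε * n := by
    rw [div_lt_iff₀ hε] at hnLk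
    linarith
  -- the hierarchical decomposition of the length-n prefix
  set P : ℕ → Prop := fun r => (blockWord σ u k r).length ≤ n with hPdef
  set p := Nat.findGreatest P n with hpdef
  have hP0 : P 0 := by simp [hPdef, blockWord]
  have hp_le : (blockWord σ u k p).length ≤ n := Nat.findGreatest_spec (Nat.zero_le n) hP0
  have hsucc : ∀ r, (blockWord σ u k (r + 1)).length
      = (blockWord σ u k r).length + (iterWord σ k (u r)).length := by
    intro r
    rw [blockWord, blockWord, List.range_succ, List.flatMap_append, List.length_append]
    simp
  have hple : ∀ r, r ≤ (blockWord σ u k r).length := by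
    intro r
    induction r with
    | zero => simp
    | succ r ih =>
      have h := hlenpos (u r)
      rw [hsucc r]
      omega
  have hmax : n < (blockWord σ u k (p + 1)).length := by
    rcases le_or_gt (p + 1) n with h | h
    · by_contra hcon
      push_neg at hcon
      exact Nat.findGreatest_is_greatest (Nat.lt_succ_self p) h hcon
    · exact Nat.lt_of_lt_of_le h (hple (p + 1))
  set q := (blockWord σ u k p).length with hqdef
  have hpref : blockWord σ u k p = (List.range q).map u := by
    apply List.ext_get
    · simp [hqdef]
    · intro j h1 h2
      rw [blockWord_prefix σ u hu k p j h1]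
      simp
  have hcount : ((Finset.range q).filter (fun t => u t = i)).card
      = ∑ t ∈ Finset.range p, (Mn ^ k) i (u t) := by
    rw [card_filter_eq_count, ← hpref, blockWord,
      count_flatMap i (List.range p) (fun t => iterWord σ k (u t))]
    show ∑ t ∈ Finset.range p, (iterWord σ k (u t)).count i = _
    exact Finset.sum_congr rfl fun t _ => count_iterWord σ k (u t) i
  have hqsum : q = ∑ t ∈ Finset.range p, (iterWord σ k (u t)).length := by
    rw [hqdef, blockWord, List.length_flatMap]
    rfl
  have hq_le_n : q ≤ n := hp_le
  have hn_lt : n < q + Lk := by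
    have h1 := hmax
    rw [hsucc p] at h1
    have h2 := hLk (u p)
    omega
  have hcard_mono : ((Finset.range q).filter (fun t => u t = i)).card
      ≤ ((Finset.range n).filter (fun t => u t = i)).card :=
    Finset.card_le_card (Finset.filter_subset_filter _ (Finset.range_subset_range.2 hq_le_n))
  have hcard_upper : ((Finset.range n).filter (fun t => u t = i)).card
      ≤ ((Finset.range q).filter (fun t => u t = i)).card + (n - q) := by
    have h1 : Finset.range n = Finset.range q ∪ Finset.Ico q n := by
      rw [Finset.range_eq_Ico, ← Finset.Ico_union_Ico_eq_Ico (Nat.zero_le q) hq_le_n,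
        ← Finset.range_eq_Ico]
    rw [h1, Finset.filter_union]
    refine le_trans (Finset.card_union_le _ _) ?_
    gcongr
    refine le_trans (Finset.card_filter_le _ _) ?_
    rw [Nat.card_Ico]
  set cn := ((Finset.range n).filter (fun t => u t = i)).card with hcndef
  set C := ∑ t ∈ Finset.range p, (Mn ^ k) i (u t) with hCdef
  have hA : C ≤ cn := hcount ▸ hcard_mono
  have hB : cn ≤ C + Lk := by
    have h1 := hcard_upper
    rw [hcount] at h1
    omega
  have h1 : |(cn : ℝ) - C| ≤ Lk := by
    rw [abs_le]
    constructor
    · have : (C : ℝ) ≤ cn := by exact_mod_cast hA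
      have hLk0 : (0 : ℝ) ≤ Lk := by positivity
      linarith
    · have : (cn : ℝ) ≤ C + Lk := by exact_mod_cast hB
      linarith
  have h2 : |(C : ℝ) - v i * q| ≤ ε / 4 * q := by
    have hCcast : (C : ℝ) = ∑ t ∈ Finset.range p, ((Mn ^ k) i (u t) : ℝ) := by
      rw [hCdef]; push_cast; rfl
    have hqcast : (q : ℝ) = ∑ t ∈ Finset.range p, ((iterWord σ k (u t)).length : ℝ) := by
      rw [hqsum]; push_cast; rfl
    rw [hCcast, hqcast, Finset.mul_sum, Finset.mul_sum, ← Finset.sum_sub_distrib]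
    refine le_trans (Finset.abs_sum_le_sum_abs _ _) (Finset.sum_le_sum fun t _ => ?_)
    exact hblock (u t)
  have hvile : v i ≤ 1 := by
    rw [← hvnorm]
    exact Finset.single_le_sum (fun j _ => (hv j).le) (Finset.mem_univ i)
  have hnq : (n : ℝ) - q ≤ Lk := by
    have : (n : ℝ) < q + Lk := by exact_mod_cast hn_lt
    linarith
  have hqn : (q : ℝ) ≤ n := by exact_mod_cast hq_le_n
  have hmain : |(cn : ℝ) - v i * n| ≤ ε / 4 * n + 2 * Lk := by
    have hvq : v i * ((n : ℝ) - q) ≤ 1 * ((n : ℝ) - q) :=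
      mul_le_mul_of_nonneg_right hvile (by linarith)
    have hvq0 : 0 ≤ v i * ((n : ℝ) - q) := mul_nonneg (hv i).le (by linarith)
    rw [abs_le] at h1 h2 ⊢
    have hq4 : ε / 4 * q ≤ ε / 4 * n := by
      apply mul_le_mul_of_nonneg_left hqn (by positivity)
    constructor
    · nlinarith
    · nlinarith
  rw [Real.dist_eq]
  have heq : |(cn : ℝ) / n - v i| = |(cn : ℝ) - v i * n| / n := by
    have h0 : (cn : ℝ) / n - v i = ((cn : ℝ) - v i * n) / n := by
      field_simp
    rw [h0, abs_div, abs_of_pos hnR]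
  rw [heq, div_lt_iff₀ hnR]
  calc |(cn : ℝ) - v i * n| ≤ ε / 4 * n + 2 * Lk := hmain
    _ < ε * n := by linarith
end

section
/- Let α ∈ (0,1) be irrational and let b ∈ (0,1] satisfy b ∈ αℤ + ℤ (i.e., b = kα + l for some integers k, l). Then the set Λ = { n ∈ ℤ : (nα mod 1) ∈ [0,b) } is bounded distance equivalent to the lattice (1/b)·ℤ. -/
namespace HOBDE

noncomputable def T (α : ℝ) (k : ℤ) (n : ℤ) : ℤ :=
  if 0 ≤ k then ∑ j ∈ Finset.range k.natAbs, ⌊((n : ℝ) - 1 - (j : ℝ)) * α⌋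
  else - ∑ j ∈ Finset.range k.natAbs, ⌊((n : ℝ) + (j : ℝ)) * α⌋

noncomputable def D (α : ℝ) (k l : ℤ) (n : ℤ) : ℤ :=
  ⌊(n : ℝ) * α⌋ + l - ⌊((n : ℝ) - (k : ℝ)) * α⌋

noncomputable def F (α : ℝ) (k l : ℤ) (n : ℤ) : ℤ := n * l + T α k n - T α k 0

theorem Dval (α b : ℝ) (k l : ℤ) (hb : b = k * α + l) (hb0 : 0 < b) (hb1 : b ≤ 1) (n : ℤ) :
    D α k l n = if Int.fract ((n : ℝ) * α) < b then 1 else 0 := by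
  have h1 : ((n : ℝ) - k) * α = ((⌊(n : ℝ) * α⌋ + l : ℤ) : ℝ) + (Int.fract ((n : ℝ) * α) - b) := by
    rw [Int.fract, hb]; push_cast; ring
  have h2 : ⌊((n : ℝ) - k) * α⌋ = ⌊(n : ℝ) * α⌋ + l + ⌊Int.fract ((n : ℝ) * α) - b⌋ := by
    rw [h1, Int.floor_intCast_add]
  have hf0 : (0:ℝ) ≤ Int.fract ((n : ℝ) * α) := Int.fract_nonneg _
  have hf1 : Int.fract ((n : ℝ) * α) < 1 := Int.fract_lt_one _
  by_cases hlt : Int.fract ((n : ℝ) * α) < b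
  · have hfl : ⌊Int.fract ((n : ℝ) * α) - b⌋ = -1 := by
      rw [Int.floor_eq_iff]
      constructor <;> push_cast <;> linarith
    rw [if_pos hlt]; simp only [D, h2, hfl]; ring
  · push_neg at hlt
    have hfl : ⌊Int.fract ((n : ℝ) * α) - b⌋ = 0 := by
      rw [Int.floor_eq_iff]
      constructor <;> push_cast <;> linarith
    rw [if_neg (by push_neg; exact hlt)]; simp only [D, h2, hfl]; ring

theorem Tstep (α : ℝ) (k : ℤ) (n : ℤ) :
    T α k (n + 1) = T α k n + ⌊(n : ℝ) * α⌋ - ⌊((n : ℝ) - (k : ℝ)) * α⌋ := by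
  rcases le_or_gt 0 k with hk | hk
  · have hKk : ((k.natAbs : ℕ) : ℝ) = (k : ℝ) := by
      rw [← Int.cast_natCast, Int.natAbs_of_nonneg hk]
    set K := k.natAbs with hK
    set f : ℕ → ℤ := fun j => ⌊((n : ℝ) - j) * α⌋ with hf
    have e1 : T α k (n + 1) = ∑ j ∈ Finset.range K, f j := by
      simp only [T, if_pos hk, hf]
      refine Finset.sum_congr rfl fun j _ => ?_
      congr 2; push_cast; ring
    have e2 : T α k n = ∑ j ∈ Finset.range K, f (j + 1) := by
      simp only [T, if_pos hk, hf]
      refine Finset.sum_congr rfl fun j _ => ?_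
      congr 2; push_cast; ring
    have htel := Finset.sum_range_sub' f K
    rw [Finset.sum_sub_distrib] at htel
    have hf0 : f 0 = ⌊(n : ℝ) * α⌋ := by simp [hf]
    have hfK : f K = ⌊((n : ℝ) - (k:ℝ)) * α⌋ := by rw [hf]; simp only []; rw [hKk]
    rw [e1, e2]; omega
  · have hk' : ¬ (0 ≤ k) := not_le.mpr hk
    have hKk : ((k.natAbs : ℕ) : ℝ) = -(k : ℝ) := by
      have hKZ : ((k.natAbs : ℕ) : ℤ) = -k := by omega
      rw [← Int.cast_natCast, hKZ, Int.cast_neg]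
    set K := k.natAbs with hK
    set f : ℕ → ℤ := fun j => ⌊((n : ℝ) + j) * α⌋ with hf
    have e1 : T α k (n + 1) = - ∑ j ∈ Finset.range K, f (j + 1) := by
      simp only [T, if_neg hk', hf]
      congr 1
      refine Finset.sum_congr rfl fun j _ => ?_
      congr 2; push_cast; ring
    have e2 : T α k n = - ∑ j ∈ Finset.range K, f j := by
      simp only [T, if_neg hk', hf]; rfl
    have htel := Finset.sum_range_sub f K
    rw [Finset.sum_sub_distrib] at htel
    have hf0 : f 0 = ⌊(n : ℝ) * α⌋ := by simp [hf]
    have hfK : f K = ⌊((n : ℝ) - (k:ℝ)) * α⌋ := by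
      rw [hf]; simp only []; rw [hKk]; ring_nf
    rw [e1, e2]; omega

theorem Fstep (α : ℝ) (k l : ℤ) (n : ℤ) :
    F α k l (n + 1) = F α k l n + D α k l n := by
  simp only [F, D]; rw [Tstep]; ring

theorem Tbound (α : ℝ) (hα0 : 0 < α) (hα1 : α < 1) (k : ℤ) (n : ℤ) :
    |(T α k n : ℝ) - (n : ℝ) * (k : ℝ) * α| ≤ (k.natAbs : ℝ) * ((k.natAbs : ℝ) + 1) := by
  have hterm : ∀ (x : ℝ) (j : ℕ), j < k.natAbs → |x| ≤ (1 + (j:ℝ)) * α →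
      |(⌊(x + (n:ℝ) * α)⌋ : ℝ) - (n:ℝ) * α| ≤ 1 + (k.natAbs : ℝ) := by
    intro x j hj hx
    have h1 : ((⌊(x + (n:ℝ) * α)⌋ : ℤ) : ℝ) ≤ x + (n:ℝ) * α := Int.floor_le _
    have h2 : x + (n:ℝ) * α < (⌊(x + (n:ℝ) * α)⌋ : ℝ) + 1 := Int.lt_floor_add_one _
    have hjK : (1 + (j:ℝ)) ≤ (k.natAbs : ℝ) := by
      have : (j:ℝ) + 1 ≤ (k.natAbs : ℝ) := by exact_mod_cast Nat.succ_le_of_lt hj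
      linarith
    have hxK : |x| ≤ (k.natAbs : ℝ) := by
      calc |x| ≤ (1 + (j:ℝ)) * α := hx
        _ ≤ (1 + (j:ℝ)) * 1 := by nlinarith
        _ ≤ (k.natAbs : ℝ) := by linarith
    rw [abs_le] at hxK ⊢
    constructor <;> linarith [hxK.1, hxK.2]
  rcases le_or_gt 0 k with hk | hk
  · have hKk : ((k.natAbs : ℕ) : ℝ) = (k : ℝ) := by
      rw [← Int.cast_natCast, Int.natAbs_of_nonneg hk]
    set K := k.natAbs with hK
    have key : (T α k n : ℝ) - (n : ℝ) * (k : ℝ) * α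
        = ∑ j ∈ Finset.range K, ((⌊((n:ℝ)-1-(j:ℝ))*α⌋ : ℝ) - (n:ℝ) * α) := by
      rw [Finset.sum_sub_distrib, Finset.sum_const, Finset.card_range, nsmul_eq_mul]
      simp only [T, if_pos hk]
      push_cast
      rw [hKk]; ring
    rw [key]
    calc |∑ j ∈ Finset.range K, ((⌊((n:ℝ)-1-(j:ℝ))*α⌋ : ℝ) - (n:ℝ) * α)|
        ≤ ∑ j ∈ Finset.range K, |(⌊((n:ℝ)-1-(j:ℝ))*α⌋ : ℝ) - (n:ℝ) * α| :=
          Finset.abs_sum_le_sum_abs _ _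
      _ ≤ ∑ _j ∈ Finset.range K, (1 + (K:ℝ)) := by
          refine Finset.sum_le_sum fun j hj => ?_
          have harg : ((n:ℝ)-1-(j:ℝ))*α = (-1-(j:ℝ))*α + (n:ℝ)*α := by ring
          have habs : |(-1-(j:ℝ))*α| ≤ (1 + (j:ℝ)) * α := by
            rw [show (-1-(j:ℝ))*α = -((1+(j:ℝ))*α) by ring, abs_neg,
              abs_of_nonneg (by positivity)]
          rw [harg]
          exact hterm _ j (Finset.mem_range.mp hj) habs
      _ = (K:ℝ) * (1 + (K:ℝ)) := by
          rw [Finset.sum_const, Finset.card_range, nsmul_eq_mul]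
      _ = (K:ℝ) * ((K:ℝ) + 1) := by ring
  · have hk' : ¬ (0 ≤ k) := not_le.mpr hk
    have hKk : ((k.natAbs : ℕ) : ℝ) = -(k : ℝ) := by
      have hKZ : ((k.natAbs : ℕ) : ℤ) = -k := by omega
      rw [← Int.cast_natCast, hKZ, Int.cast_neg]
    set K := k.natAbs with hK
    have key : (T α k n : ℝ) - (n : ℝ) * (k : ℝ) * α
        = -∑ j ∈ Finset.range K, ((⌊((n:ℝ)+(j:ℝ))*α⌋ : ℝ) - (n:ℝ) * α) := by
      rw [Finset.sum_sub_distrib, Finset.sum_const, Finset.card_range, nsmul_eq_mul]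
      simp only [T, if_neg hk']
      push_cast
      rw [hKk]; ring
    rw [key, abs_neg]
    calc |∑ j ∈ Finset.range K, ((⌊((n:ℝ)+(j:ℝ))*α⌋ : ℝ) - (n:ℝ) * α)|
        ≤ ∑ j ∈ Finset.range K, |(⌊((n:ℝ)+(j:ℝ))*α⌋ : ℝ) - (n:ℝ) * α| :=
          Finset.abs_sum_le_sum_abs _ _
      _ ≤ ∑ _j ∈ Finset.range K, (1 + (K:ℝ)) := by
          refine Finset.sum_le_sum fun j hj => ?_
          have harg : ((n:ℝ)+(j:ℝ))*α = (j:ℝ)*α + (n:ℝ)*α := by ring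
          have habs : |(j:ℝ)*α| ≤ (1 + (j:ℝ)) * α := by
            rw [abs_of_nonneg (by positivity)]; nlinarith [Nat.cast_nonneg (α := ℝ) j]
          rw [harg]
          exact hterm _ j (Finset.mem_range.mp hj) habs
      _ = (K:ℝ) * (1 + (K:ℝ)) := by
          rw [Finset.sum_const, Finset.card_range, nsmul_eq_mul]
      _ = (K:ℝ) * ((K:ℝ) + 1) := by ring

theorem Fbound (α b : ℝ) (k l : ℤ) (hb : b = k * α + l) (hα0 : 0 < α) (hα1 : α < 1) (n : ℤ) :
    |(F α k l n : ℝ) - (n:ℝ) * b| ≤ 2 * (k.natAbs : ℝ) * ((k.natAbs : ℝ) + 1) + 1 := by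
  have h1 := Tbound α hα0 hα1 k n
  have h2 := Tbound α hα0 hα1 k 0
  push_cast at h2
  have e : (F α k l n : ℝ) - (n:ℝ) * b
      = ((T α k n : ℝ) - (n:ℝ)*(k:ℝ)*α) - ((T α k 0 : ℝ) - 0 * (k:ℝ) * α) := by
    simp only [F, hb]; push_cast; ring
  rw [e]
  rw [abs_le] at h1 h2 ⊢
  constructor <;> [linarith [h1.1, h2.2]; linarith [h1.2, h2.1]]

theorem Fmono (α : ℝ) (k l : ℤ) (hD01 : ∀ n, D α k l n = 0 ∨ D α k l n = 1) :
    Monotone (F α k l) :=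
  monotone_int_of_le_succ fun n => by
    have h := Fstep α k l n
    rcases hD01 n with h' | h' <;> omega

theorem Fsurj (α b : ℝ) (k l : ℤ) (C : ℝ) (hb0 : 0 < b)
    (hD01 : ∀ n, D α k l n = 0 ∨ D α k l n = 1)
    (hC : ∀ n : ℤ, |(F α k l n : ℝ) - (n:ℝ) * b| ≤ C) (m : ℤ) :
    ∃ n : ℤ, F α k l n = m ∧ D α k l n = 1 := by
  classical
  have hinh : ∃ z : ℤ, m < F α k l z := by
    refine ⟨⌈((m:ℝ) + C)/b⌉ + 1, ?_⟩
    have h1 : ((m:ℝ) + C)/b < ((⌈((m:ℝ) + C)/b⌉ + 1 : ℤ) : ℝ) := by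
      push_cast; linarith [Int.le_ceil (((m:ℝ) + C)/b)]
    have h2 : (m:ℝ) + C < ((⌈((m:ℝ) + C)/b⌉ + 1 : ℤ) : ℝ) * b := (div_lt_iff₀ hb0).mp h1
    have h3 := hC (⌈((m:ℝ) + C)/b⌉ + 1)
    rw [abs_le] at h3
    have : (m:ℝ) < (F α k l (⌈((m:ℝ) + C)/b⌉ + 1) : ℝ) := by linarith [h3.1]
    exact_mod_cast this
  have hbdd : ∃ lo : ℤ, ∀ z : ℤ, m < F α k l z → lo ≤ z := by
    refine ⟨⌈((m:ℝ) - C)/b⌉, fun z hz => ?_⟩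
    have h3 := hC z
    rw [abs_le] at h3
    have hz' : (m:ℝ) < (F α k l z : ℝ) := by exact_mod_cast hz
    have h4 : ((m:ℝ) - C)/b ≤ (z:ℝ) := by
      rw [div_le_iff₀ hb0]; linarith [h3.2]
    exact_mod_cast Int.ceil_le.mpr h4
  obtain ⟨n0, hn0, hleast⟩ := Int.exists_least_of_bdd hbdd hinh
  have h1 : F α k l (n0 - 1) ≤ m := by
    by_contra h
    push_neg at h
    have := hleast _ h
    omega
  have hstep := Fstep α k l (n0 - 1)
  have hsub : n0 - 1 + 1 = n0 := by omega
  rw [hsub] at hstep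
  rcases hD01 (n0 - 1) with h | h
  · omega
  · exact ⟨n0 - 1, by omega, h⟩

end HOBDE

open HOBDE

theorem hecke_ostrowski_bde (α : ℝ) (hα : Irrational α) (hα01 : α ∈ Set.Ioo (0 : ℝ) 1)
    (b : ℝ) (hb0 : 0 < b) (hb1 : b ≤ 1) (hb : ∃ k l : ℤ, b = k * α + l) :
    BDE {x : ℝ | ∃ n : ℤ, (x : ℝ) = n ∧ Int.fract (n * α) ∈ Set.Ico (0 : ℝ) b}
      (Set.range fun n : ℤ => (n : ℝ) * (1 / b)) := by
  classical
  obtain ⟨k, l, hb⟩ := hb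
  obtain ⟨hα0, hα1⟩ := hα01
  set C : ℝ := 2 * (k.natAbs : ℝ) * ((k.natAbs : ℝ) + 1) + 1 with hCdef
  have hC0 : 0 < C := by positivity
  have hFb : ∀ n : ℤ, |(F α k l n : ℝ) - (n:ℝ) * b| ≤ C :=
    fun n => Fbound α b k l hb hα0 hα1 n
  have hDval : ∀ n : ℤ, D α k l n = if Int.fract ((n:ℝ) * α) < b then 1 else 0 :=
    fun n => Dval α b k l hb hb0 hb1 n
  have hD01 : ∀ n, D α k l n = 0 ∨ D α k l n = 1 := fun n => by
    rw [hDval n]; split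
    · exact Or.inr rfl
    · exact Or.inl rfl
  have hmem : ∀ n : ℤ, Int.fract ((n:ℝ) * α) ∈ Set.Ico (0:ℝ) b ↔ D α k l n = 1 := by
    intro n
    rw [hDval n]
    constructor
    · rintro ⟨h0, hlt⟩; rw [if_pos hlt]
    · intro h
      by_cases hlt : Int.fract ((n:ℝ)*α) < b
      · exact ⟨Int.fract_nonneg _, hlt⟩
      · rw [if_neg hlt] at h; exact absurd h (by decide)
  have hmono := Fmono α k l hD01
  have hstrict : ∀ n m : ℤ, n < m → D α k l n = 1 → F α k l n < F α k l m := by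
    intro n m hnm hD
    have h1 := Fstep α k l n
    have h2 := hmono (show n + 1 ≤ m by omega)
    omega
  have hxprop : ∀ x : {x : ℝ | ∃ n : ℤ, (x : ℝ) = n ∧ Int.fract (n * α) ∈ Set.Ico (0 : ℝ) b},
      ((⌊(x:ℝ)⌋ : ℝ) = (x:ℝ)) ∧ D α k l ⌊(x:ℝ)⌋ = 1 := by
    rintro ⟨x, n, hx, hn⟩
    subst hx
    simp only [Int.floor_intCast]
    exact ⟨trivial, (hmem n).mp hn⟩
  refine ⟨C / b + 1, by positivity, ?_⟩
  refine ⟨Equiv.ofBijective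
    (fun x => ⟨(F α k l ⌊(x:ℝ)⌋ : ℝ) * (1/b), ⟨F α k l ⌊(x:ℝ)⌋, rfl⟩⟩) ⟨?_, ?_⟩, ?_⟩
  · -- injective
    intro x y hxy
    obtain ⟨hfx, hDx⟩ := hxprop x
    obtain ⟨hfy, hDy⟩ := hxprop y
    have h := congrArg Subtype.val hxy
    simp only at h
    have hFeq : F α k l ⌊(x:ℝ)⌋ = F α k l ⌊(y:ℝ)⌋ := by
      have := mul_right_cancel₀ (one_div_ne_zero hb0.ne') h
      exact_mod_cast this
    rcases lt_trichotomy (⌊(x:ℝ)⌋) (⌊(y:ℝ)⌋) with hlt | heq | hgt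
    · exact absurd hFeq (ne_of_lt (hstrict _ _ hlt hDx))
    · apply Subtype.ext; rw [← hfx, ← hfy, heq]
    · exact absurd hFeq.symm (ne_of_lt (hstrict _ _ hgt hDy))
  · -- surjective
    rintro ⟨y, m, rfl⟩
    obtain ⟨n, hFn, hDn⟩ := Fsurj α b k l C hb0 hD01 hFb m
    refine ⟨⟨(n:ℝ), n, rfl, (hmem n).mpr hDn⟩, ?_⟩
    apply Subtype.ext
    show (F α k l ⌊((n:ℤ):ℝ)⌋ : ℝ) * (1/b) = (m:ℝ) * (1/b)
    rw [Int.floor_intCast, hFn]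
  · -- bound
    intro x
    obtain ⟨hfx, hDx⟩ := hxprop x
    have hb' := hFb ⌊(x:ℝ)⌋
    show |(x:ℝ) - (F α k l ⌊(x:ℝ)⌋ : ℝ) * (1/b)| < C/b + 1
    have e : (x:ℝ) - (F α k l ⌊(x:ℝ)⌋ : ℝ) * (1/b)
        = (((⌊(x:ℝ)⌋ : ℤ):ℝ) * b - (F α k l ⌊(x:ℝ)⌋ : ℝ)) / b := by
      rw [← hfx]; field_simp; simp only [Int.floor_intCast]; ring
    rw [e, abs_div, abs_of_pos hb0, abs_sub_comm]
    have h2 : |(F α k l ⌊(x:ℝ)⌋ : ℝ) - ((⌊(x:ℝ)⌋ : ℤ):ℝ) * b| / b ≤ C / b := by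
      gcongr
    linarith
end

section
/- Let Λ_1, …, Λ_ℓ be pairwise disjoint discrete point sets in ℝ and let a > 0. If Λ_i is bounded distance equivalent to aℤ for every i ∈ {1,…,ℓ}, then the disjoint union Λ_1 ∪ ⋯ ∪ Λ_ℓ is bounded distance equivalent to (a/ℓ)ℤ. -/
/-- A discrete (locally finite) point set in `ℝ`. -/
def DiscretePointSet (Λ : Set ℝ) : Prop :=
  ∀ r : ℝ, (Λ ∩ Metric.closedBall 0 r).Finite

theorem union_of_bde_lattices (l : ℕ) (hl : 0 < l) (Λ : Fin l → Set ℝ)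
    (hdisc : ∀ i, DiscretePointSet (Λ i))
    (hdisj : Pairwise (Function.onFun Disjoint Λ))
    (a : ℝ) (ha : 0 < a)
    (hbde : ∀ i, BDE (Λ i) (Set.range fun n : ℤ => a * n)) :
    BDE (⋃ i, Λ i) (Set.range fun n : ℤ => (a / l) * n) := by
  classical
  choose c hc φindiv hφ using hbde
  haveI : NeZero l := ⟨hl.ne'⟩
  have hane : a ≠ 0 := ne_of_gt ha
  have hlpos : (0 : ℝ) < l := by exact_mod_cast hl
  have hlne : (l : ℝ) ≠ 0 := ne_of_gt hlpos
  have hinj1 : Function.Injective (fun n : ℤ => a * (n : ℝ)) := by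
    intro m n h
    have := mul_left_cancel₀ hane h
    exact_mod_cast this
  have hinj2 : Function.Injective (fun n : ℤ => (a / l) * (n : ℝ)) := by
    intro m n h
    have := mul_left_cancel₀ (div_ne_zero hane hlne) h
    exact_mod_cast this
  set e₁ : ℤ ≃ Set.range (fun n : ℤ => a * (n : ℝ)) := Equiv.ofInjective _ hinj1 with he₁
  set e₂ : ℤ ≃ Set.range (fun n : ℤ => (a / l) * (n : ℝ)) := Equiv.ofInjective _ hinj2 with he₂
  set ψ : (⋃ i, Λ i) ≃ Σ i, Λ i := Set.unionEqSigmaOfDisjoint hdisj with hψ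
  have hval : ∀ x : ⋃ i, Λ i, (((ψ x).2 : ℝ)) = (x : ℝ) := by
    intro x
    have h := ψ.symm_apply_apply x
    exact congrArg Subtype.val h
  set Φ : (⋃ i, Λ i) ≃ Set.range (fun n : ℤ => (a / l) * (n : ℝ)) :=
    ψ.trans ((Equiv.sigmaCongrRight fun i => (φindiv i).trans e₁.symm).trans
      ((Equiv.sigmaEquivProd (Fin l) ℤ).trans
        ((Equiv.prodComm (Fin l) ℤ).trans ((Int.divModEquiv l).symm.trans e₂)))) with hΦ
  refine ⟨a + ∑ i, c i, add_pos_of_pos_of_nonneg ha (Finset.sum_nonneg fun j _ => (hc j).le), Φ, ?_⟩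
  intro x
  set i := (ψ x).1 with hi
  set y := (ψ x).2 with hy
  set m : ℤ := e₁.symm (φindiv i y) with hm
  -- value of Φ x
  have hΦx : (Φ x : ℝ) = (a / l) * ((m * l + (i : ℕ) : ℤ) : ℝ) := by
    simp only [hΦ, Equiv.trans_apply, Equiv.sigmaCongrRight_apply, Equiv.sigmaEquivProd_apply,
      Equiv.prodComm_apply, Int.divModEquiv_symm_apply, he₂, Equiv.ofInjective_apply]
    rfl
  -- value of φindiv i y
  have hφy : ((φindiv i y : ℝ)) = a * (m : ℝ) := by
    have := e₁.apply_symm_apply (φindiv i y)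
    have h2 := congrArg Subtype.val this
    simp only [he₁, Equiv.ofInjective_apply] at h2
    exact h2.symm
  have hclose : |(y : ℝ) - a * (m : ℝ)| < c i := by
    rw [← hφy]; exact hφ i y
  have hxy : (x : ℝ) = (y : ℝ) := (hval x).symm
  have hiltl : ((i : ℕ) : ℝ) < l := by exact_mod_cast i.2
  have hige : (0 : ℝ) ≤ ((i : ℕ) : ℝ) := by positivity
  have hexpand : (a / l) * ((m * l + (i : ℕ) : ℤ) : ℝ) = a * m + a * (i : ℕ) / l := by
    push_cast
    field_simp
  have hterm : 0 ≤ a * (i : ℕ) / l ∧ a * (i : ℕ) / l < a := by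
    constructor
    · positivity
    · rw [div_lt_iff₀ hlpos]
      calc a * ((i : ℕ) : ℝ) < a * l := by
            exact mul_lt_mul_of_pos_left hiltl ha
        _ = a * l := rfl
  have hci_le : c i ≤ ∑ j, c j :=
    Finset.single_le_sum (fun j _ => (hc j).le) (Finset.mem_univ i)
  rw [hΦx, hexpand, hxy]
  calc |(y : ℝ) - (a * m + a * (i : ℕ) / l)|
      ≤ |(y : ℝ) - a * m| + |a * (i : ℕ) / l| := by
        have : (y : ℝ) - (a * m + a * (i : ℕ) / l) = ((y : ℝ) - a * m) + (-(a * (i : ℕ) / l)) := by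
          ring
        rw [this]
        simpa [abs_neg] using abs_add_le ((y : ℝ) - a * m) (-(a * (i : ℕ) / l))
    _ < c i + a := by
        rw [abs_of_nonneg hterm.1]
        exact add_lt_add hclose hterm.2
    _ ≤ a + ∑ j, c j := by linarith
end

section
/- Let α ∈ ℝ^d, let x ∈ ℝ^d, and let W ⊆ [0,1)^d be a measurable set with μ(W) > 0. Suppose the set S = { n ∈ ℕ : ((x + nα) mod 1) ∈ W } is infinite, and enumerate it in increasing order as λ_0 < λ_1 < λ_2 < ⋯. Then the discrepancies D_n(W,x) are uniformly bounded in n (i.e., ∃ C > 0 ∀ n, |D_n(W,x)| < C) if and only if there is C' > 0 such that |λ_m − m/μ(W)| < C' for all m ∈ ℕ. -/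
open MeasureTheory

/-- The discrepancy `D_n(W,x) = Σ_{k<n} 1_W((x + kα) mod 1) − n·μ(W)` in `ℝ^d`,
with `mod 1` taken coordinatewise. -/
noncomputable def disc {d : ℕ} (α : Fin d → ℝ) (W : Set (Fin d → ℝ)) (x : Fin d → ℝ)
    (n : ℕ) : ℝ :=
  (∑ k ∈ Finset.range n,
      Set.indicator W (fun _ => (1 : ℝ)) (fun i => Int.fract (x i + k * α i)))
    - n * (volume W).toReal

theorem bounded_discrepancy_iff_bounded_distance {d : ℕ} (α x : Fin d → ℝ)
    (W : Set (Fin d → ℝ)) (hWsub : W ⊆ {y | ∀ i, y i ∈ Set.Ico (0 : ℝ) 1})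
    (hWmeas : MeasurableSet W) (hWpos : 0 < volume W)
    (S : Set ℕ) (hS : S = {n : ℕ | (fun i => Int.fract (x i + n * α i)) ∈ W})
    (hSinf : S.Infinite)
    -- `lam` enumerates `S` in increasing order: `λ_0 < λ_1 < λ_2 < ⋯`
    (lam : ℕ → ℕ) (hmono : StrictMono lam) (hrange : Set.range lam = S) :
    (∃ C : ℝ, 0 < C ∧ ∀ n : ℕ, |disc α W x n| < C) ↔
      (∃ C' : ℝ, 0 < C' ∧ ∀ m : ℕ, |(lam m : ℝ) - m / (volume W).toReal| < C') := by
  classical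
  set v : ℝ := (volume W).toReal with hvdef
  have hfin : volume W ≠ ⊤ := by
    have h1 : volume W ≤ volume (Set.univ.pi fun _ : Fin d => Set.Ico (0:ℝ) 1) := by
      apply measure_mono
      intro y hy i _
      exact hWsub hy i
    have h2 : volume (Set.univ.pi fun _ : Fin d => Set.Ico (0:ℝ) 1) = 1 := by
      rw [volume_pi_pi]; simp
    exact ne_top_of_le_ne_top (by rw [h2]; exact ENNReal.one_ne_top) h1
  have hv : 0 < v := ENNReal.toReal_pos hWpos.ne' hfin
  set P : ℕ → Prop := fun k => (fun i => Int.fract (x i + k * α i)) ∈ W with hP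
  have hSP : ∀ k, k ∈ S ↔ P k := by intro k; rw [hS]; rfl
  set f : ℕ → ℕ := fun n => ((Finset.range n).filter P).card with hf
  -- disc in terms of f
  have hdisc : ∀ n, disc α W x n = (f n : ℝ) - n * v := by
    intro n
    unfold disc
    congr 1
    rw [hf]
    rw [← Finset.sum_boole]
    apply Finset.sum_congr rfl
    intro k _
    exact Set.indicator_apply _ _ _
  -- membership in S via lam
  have hmem : ∀ k, P k ↔ ∃ j, lam j = k := by
    intro k
    rw [← hSP, ← hrange]
    exact ⟨fun h => h, fun h => h⟩
  -- Lemma A : f (lam m) = m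
  have hA : ∀ m, f (lam m) = m := by
    intro m
    have : (Finset.range (lam m)).filter P = (Finset.range m).image lam := by
      ext k
      simp only [Finset.mem_filter, Finset.mem_range, Finset.mem_image]
      constructor
      · rintro ⟨hk, hPk⟩
        obtain ⟨j, rfl⟩ := (hmem k).mp hPk
        exact ⟨j, hmono.lt_iff_lt.mp hk, rfl⟩
      · rintro ⟨j, hj, rfl⟩
        exact ⟨hmono hj, (hmem _).mpr ⟨j, rfl⟩⟩
    rw [hf]
    simp only [this]
    rw [Finset.card_image_of_injective _ hmono.injective, Finset.card_range]
  -- Lemma B : n ≤ lam (f n)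
  have hB : ∀ n, n ≤ lam (f n) := by
    intro n
    by_contra h
    push_neg at h
    have hsub : (Finset.range (f n + 1)).image lam ⊆ (Finset.range n).filter P := by
      intro k hk
      simp only [Finset.mem_image, Finset.mem_range] at hk
      obtain ⟨j, hj, rfl⟩ := hk
      have : lam j ≤ lam (f n) := hmono.monotone (Nat.lt_succ_iff.mp hj)
      exact Finset.mem_filter.mpr ⟨Finset.mem_range.mpr (lt_of_le_of_lt this h),
        (hmem _).mpr ⟨j, rfl⟩⟩
    have h2 := Finset.card_le_card hsub
    rw [Finset.card_image_of_injective _ hmono.injective, Finset.card_range] at h2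
    have h3 : f n + 1 ≤ f n := h2
    omega
  -- Lemma C : f n = m + 1 → lam m < n
  have hC : ∀ n m, f n = m + 1 → lam m < n := by
    intro n m hfn
    by_contra h
    push_neg at h
    have hsub : (Finset.range n).filter P ⊆ (Finset.range m).image lam := by
      intro k hk
      simp only [Finset.mem_filter, Finset.mem_range] at hk
      obtain ⟨hk1, hk2⟩ := hk
      obtain ⟨j, rfl⟩ := (hmem k).mp hk2
      have : lam j < lam m := lt_of_lt_of_le hk1 h
      exact Finset.mem_image.mpr ⟨j, Finset.mem_range.mpr (hmono.lt_iff_lt.mp this), rfl⟩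
    have h2 := Finset.card_le_card hsub
    rw [Finset.card_image_of_injective _ hmono.injective, Finset.card_range] at h2
    have h3 : f n ≤ m := h2
    omega
  constructor
  · rintro ⟨C, hC0, hCb⟩
    refine ⟨C / v, div_pos hC0 hv, fun m => ?_⟩
    have h1 := hCb (lam m)
    rw [hdisc, hA] at h1
    have key : |(lam m : ℝ) - m / v| = |(m : ℝ) - lam m * v| / v := by
      have e : (lam m : ℝ) - m / v = ((lam m : ℝ) * v - m) / v := by field_simp
      rw [e, abs_div, abs_of_pos hv, abs_sub_comm]
    rw [key]
    exact (div_lt_div_iff_of_pos_right hv).mpr h1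
  · rintro ⟨C', hC0', hCb'⟩
    refine ⟨C' * v + 1, by positivity, fun n => ?_⟩
    rw [hdisc]
    rw [abs_lt]
    rcases Nat.eq_zero_or_pos (f n) with h0 | hpos
    · -- f n = 0 : n ≤ lam 0, lam 0 < C'
      have hn : (n : ℝ) ≤ lam 0 := by
        have := hB n
        rw [h0] at this
        exact_mod_cast this
      have hl0 : (lam 0 : ℝ) < C' := by
        have := hCb' 0
        simp only [Nat.cast_zero, zero_div, sub_zero] at this
        exact lt_of_abs_lt this
      have hnv : (n : ℝ) * v < C' * v := by
        calc (n:ℝ) * v ≤ lam 0 * v := by nlinarith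
        _ < C' * v := by nlinarith
      constructor
      · rw [h0]; push_cast; nlinarith
      · rw [h0]; push_cast
        have : (0:ℝ) ≤ n * v := by positivity
        nlinarith
    · obtain ⟨m, hm⟩ : ∃ m, f n = m + 1 := ⟨f n - 1, by omega⟩
      have hlam_lt : lam m < n := hC n m hm
      have hlam_ge : n ≤ lam (m + 1) := by have := hB n; rwa [hm] at this
      have habs1 := abs_lt.mp (hCb' m)
      have habs2 := abs_lt.mp (hCb' (m + 1))
      rw [hm]
      push_cast
      have e1 : (m : ℝ) / v < lam m + C' := by linarith [habs1.1]
      have e2 : ((m : ℝ) + 1) / v > lam (m+1) - C' := by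
        have := habs2.2
        push_cast at this
        linarith
      have hlam_lt' : (lam m : ℝ) ≤ (n : ℝ) - 1 := by
        have : (lam m : ℝ) + 1 ≤ n := by exact_mod_cast hlam_lt
        linarith
      have hlam_ge' : (n : ℝ) ≤ lam (m+1) := by exact_mod_cast hlam_ge
      constructor
      · -- -(C'v+1) < (m+1) - n v
        -- (m+1)/v > lam(m+1) - C' ≥ n - C'  ⇒ m+1 > (n - C') v = n v - C' v
        have : ((m:ℝ) + 1) / v > n - C' := by linarith
        have h3 : ((n:ℝ) - C') * v < (m:ℝ) + 1 := (lt_div_iff₀ hv).mp this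
        nlinarith
      · -- m+1 - n v < C' v + 1
        -- m/v < lam m + C' ≤ n - 1 + C' ⇒ m < (n-1+C') v ≤ n v + C' v - v < n v + C' v
        have h4 : (m : ℝ) / v < n - 1 + C' := by linarith
        have h5 : (m : ℝ) < (n - 1 + C') * v := (div_lt_iff₀ hv).mp h4
        nlinarith
end

section
/- Let V₁ and V₂ be countable sets and let r : V₁ → V₂ → Prop be a relation such that for every v ∈ V₁ the set { w ∈ V₂ : r v w } is finite, and for every w ∈ V₂ the set { v ∈ V₁ : r v w } is finite. Assume the Hall condition on both sides: for every finite subset X ⊆ V₁, the set { w ∈ V₂ : ∃ v ∈ X, r v w } has at least |X| elements, and for every finite subset Y ⊆ V₂, the set { v ∈ V₁ : ∃ w ∈ Y, r v w } has at least |Y| elements. Then there exists a bijection f : V₁ → V₂ such that r v (f v) holds for every v ∈ V₁. -/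
/-- Schröder–Bernstein with structure: the bijection agrees with `f` or with `g⁻¹`. -/
theorem csb_struct {α β : Type*} (f : α → β) (g : β → α)
    (hf : Function.Injective f) (hg : Function.Injective g) :
    ∃ h : α → β, Function.Bijective h ∧ ∀ a, h a = f a ∨ g (h a) = a := by
  classical
  set F : Set α →o Set α :=
    ⟨fun S => (g '' (f '' S)ᶜ)ᶜ, fun S T hST =>
      Set.compl_subset_compl.2 (Set.image_mono (Set.compl_subset_compl.2
        (Set.image_mono hST)))⟩ with hF
  set S : Set α := OrderHom.lfp F with hS
  have hfix : F S = S := OrderHom.map_lfp F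
  have hcompl : Sᶜ = g '' (f '' S)ᶜ := by
    conv_lhs => rw [← hfix]
    simp [hF]
    exact compl_compl _
  have hsel : ∀ a : α, a ∉ S → ∃ b, b ∉ f '' S ∧ g b = a := by
    intro a ha
    have : a ∈ g '' (f '' S)ᶜ := hcompl ▸ ha
    obtain ⟨b, hb, hba⟩ := this
    exact ⟨b, hb, hba⟩
  choose sel hsel1 hsel2 using hsel
  refine ⟨fun a => if h : a ∈ S then f a else sel a h, ?_, ?_⟩
  · constructor
    · intro a₁ a₂ h12
      dsimp only at h12
      by_cases h1 : a₁ ∈ S <;> by_cases h2 : a₂ ∈ S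
      · rw [dif_pos h1, dif_pos h2] at h12; exact hf h12
      · rw [dif_pos h1, dif_neg h2] at h12
        exact absurd ⟨a₁, h1, h12⟩ (hsel1 a₂ h2)
      · rw [dif_neg h1, dif_pos h2] at h12
        exact absurd ⟨a₂, h2, h12.symm⟩ (hsel1 a₁ h1)
      · rw [dif_neg h1, dif_neg h2] at h12
        have e1 := hsel2 a₁ h1
        rw [h12, hsel2 a₂ h2] at e1
        exact e1.symm
    · intro b
      by_cases hb : b ∈ f '' S
      · obtain ⟨a, ha, rfl⟩ := hb
        exact ⟨a, dif_pos ha⟩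
      · have hgb : g b ∉ S := by
          have : g b ∈ Sᶜ := hcompl ▸ ⟨b, hb, rfl⟩
          exact this
        refine ⟨g b, ?_⟩
        dsimp only
        rw [dif_neg hgb]
        exact hg (hsel2 (g b) hgb)
  · intro a
    dsimp only
    by_cases h : a ∈ S
    · left; exact dif_pos h
    · right; rw [dif_neg h]; exact hsel2 a h

theorem rado_infinite_hall {V₁ V₂ : Type*} [Countable V₁] [Countable V₂]
    (r : V₁ → V₂ → Prop)
    -- all vertex degrees are finite
    (hfin₁ : ∀ v : V₁, {w : V₂ | r v w}.Finite)
    (hfin₂ : ∀ w : V₂, {v : V₁ | r v w}.Finite)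
    -- the Hall condition on both sides
    (hall₁ : ∀ X : Finset V₁, X.card ≤ {w : V₂ | ∃ v ∈ X, r v w}.ncard)
    (hall₂ : ∀ Y : Finset V₂, Y.card ≤ {v : V₁ | ∃ w ∈ Y, r v w}.ncard) :
    ∃ f : V₁ → V₂, Function.Bijective f ∧ ∀ v : V₁, r v (f v) := by
  classical
  have inst1 : ∀ v : V₁, Fintype (SetRel.image {p : V₁ × V₂ | r p.1 p.2} {v}) := fun v =>
    Set.Finite.fintype (by
      have : SetRel.image {p : V₁ × V₂ | r p.1 p.2} {v} = {w | r v w} := by ext w; simp [SetRel.image]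
      rw [this]; exact hfin₁ v)
  have inst2 : ∀ w : V₂, Fintype (SetRel.image {p : V₂ × V₁ | r p.2 p.1} {w}) := fun w =>
    Set.Finite.fintype (by
      have : SetRel.image {p : V₂ × V₁ | r p.2 p.1} {w} = {v | r v w} := by ext v; simp [SetRel.image]
      rw [this]; exact hfin₂ w)
  have H1 : ∀ X : Finset V₁, X.card ≤ Fintype.card (SetRel.image {p : V₁ × V₂ | r p.1 p.2} ↑X) := by
    intro X
    have hX : SetRel.image {p : V₁ × V₂ | r p.1 p.2} ↑X = {w | ∃ v ∈ X, r v w} := by ext w; simp [SetRel.image]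
    have : {w | ∃ v ∈ X, r v w}.ncard = Fintype.card (SetRel.image {p : V₁ × V₂ | r p.1 p.2} ↑X) := by
      rw [← hX]
      exact (Set.ncard_eq_toFinset_card' _).trans (Set.toFinset_card _)
    exact this ▸ hall₁ X
  have H2 : ∀ Y : Finset V₂, Y.card ≤ Fintype.card (SetRel.image {p : V₂ × V₁ | r p.2 p.1} ↑Y) := by
    intro Y
    have hY : SetRel.image {p : V₂ × V₁ | r p.2 p.1} ↑Y = {v | ∃ w ∈ Y, r v w} := by
      ext v; simp [SetRel.image]
    have : {v | ∃ w ∈ Y, r v w}.ncard = Fintype.card (SetRel.image {p : V₂ × V₁ | r p.2 p.1} ↑Y) := by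
      rw [← hY]
      exact (Set.ncard_eq_toFinset_card' _).trans (Set.toFinset_card _)
    exact this ▸ hall₂ Y
  obtain ⟨f, hfinj, hfr⟩ := (Fintype.all_card_le_rel_image_card_iff_exists_injective {p : V₁ × V₂ | r p.1 p.2}).1 H1
  obtain ⟨g, hginj, hgr⟩ :=
    (Fintype.all_card_le_rel_image_card_iff_exists_injective {p : V₂ × V₁ | r p.2 p.1}).1 H2
  obtain ⟨h, hbij, hor⟩ := csb_struct f g hfinj hginj
  refine ⟨h, hbij, fun v => ?_⟩
  rcases hor v with h1 | h1
  · rw [h1]; exact hfr v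
  · have := hgr (h v)
    rwa [h1] at this
end

section
/- Let τ = (1+√5)/2. The Fibonacci cut-and-project set Λ([−1/τ, 1)) = { π₁(x) : x ∈ Γ, π₂(x) ∈ [−1/τ, 1) } is bounded distance equivalent to the lattice ((τ+2)/(τ+1))·ℤ. -/
/-- The golden ratio `τ = (1+√5)/2`. -/
noncomputable def τ : ℝ := (1 + Real.sqrt 5) / 2

/-- The Fibonacci lattice `Γ ⊆ ℝ²`, spanned over `ℤ` by `(1,1)` and `(τ, −1/τ)`. -/
noncomputable def fibLattice : Set (ℝ × ℝ) :=
  {p : ℝ × ℝ | ∃ m n : ℤ, p = (m : ℝ) • ((1 : ℝ), (1 : ℝ)) + (n : ℝ) • (τ, -1 / τ)}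

/-- The cut-and-project set with lattice `fibLattice` and window `W`. -/
noncomputable def cps (W : Set ℝ) : Set ℝ :=
  {y : ℝ | ∃ p ∈ fibLattice, p.2 ∈ W ∧ p.1 = y}

lemma tau_sq : τ * τ = τ + 1 := by
  have h5 : Real.sqrt 5 * Real.sqrt 5 = 5 := Real.mul_self_sqrt (by norm_num)
  unfold τ; ring_nf; nlinarith [h5]

lemma one_lt_tau : 1 < τ := by
  have h5 : Real.sqrt 5 * Real.sqrt 5 = 5 := Real.mul_self_sqrt (by norm_num)
  have := Real.sqrt_nonneg 5
  unfold τ; nlinarith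

lemma tau_pos : 0 < τ := lt_trans one_pos one_lt_tau

lemma tau_inv : 1 / τ = τ - 1 := by
  rw [div_eq_iff tau_pos.ne']
  nlinarith [tau_sq]

noncomputable def nn (k : ℤ) : ℤ := ⌊((k : ℝ) - 1) / τ⌋ + 1

noncomputable def ff (k : ℤ) : ℝ := (k : ℝ) + (nn k : ℝ) / τ

lemma delta_bounds (k : ℤ) :
    -1 / τ ≤ (k : ℝ) - (nn k : ℝ) * τ ∧ (k : ℝ) - (nn k : ℝ) * τ < 1 := by
  have h1 : (⌊((k : ℝ) - 1) / τ⌋ : ℝ) ≤ ((k : ℝ) - 1) / τ := Int.floor_le _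
  have h2 : ((k : ℝ) - 1) / τ < (⌊((k : ℝ) - 1) / τ⌋ : ℝ) + 1 := Int.lt_floor_add_one _
  have hτ := tau_pos
  have hne := tau_pos.ne'
  have hinv := tau_inv
  have hsq := tau_sq
  have h1' : (⌊((k : ℝ) - 1) / τ⌋ : ℝ) * τ ≤ (k : ℝ) - 1 := by
    rw [le_div_iff₀ hτ] at h1
    linarith
  have h2' : (k : ℝ) - 1 < ((⌊((k : ℝ) - 1) / τ⌋ : ℝ) + 1) * τ := by
    rw [div_lt_iff₀ hτ] at h2
    linarith
  constructor
  · simp only [nn, Int.cast_add, Int.cast_one]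
    have : -1 / τ = 1 - τ := by
      rw [neg_div, tau_inv]; ring
    rw [this]
    nlinarith
  · simp only [nn, Int.cast_add, Int.cast_one]
    nlinarith

lemma range_ff : Set.range ff = cps (Set.Ico (-1 / τ) 1) := by
  have hτ := tau_pos
  have hne := tau_pos.ne'
  have hinv := tau_inv
  have hsq := tau_sq
  ext y
  constructor
  · rintro ⟨k, rfl⟩
    refine ⟨(((k - nn k : ℤ) : ℝ) + (nn k : ℝ) * τ, ((k - nn k : ℤ) : ℝ) + (nn k : ℝ) * (-1 / τ)),
      ⟨k - nn k, nn k, by simp [Prod.ext_iff]⟩, ?_, ?_⟩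
    · obtain ⟨hlo, hhi⟩ := delta_bounds k
      have heq : ((k - nn k : ℤ) : ℝ) + (nn k : ℝ) * (-1 / τ) = (k : ℝ) - (nn k : ℝ) * τ := by
        push_cast
        have : (nn k : ℝ) * (-1 / τ) = (nn k : ℝ) * (1 - τ) := by
          rw [neg_div, tau_inv]; ring
        rw [this]; ring
      rw [heq]
      exact ⟨hlo, hhi⟩
    · simp only [ff]
      push_cast
      have hd : (nn k : ℝ) / τ = (nn k : ℝ) * (τ - 1) := by
        rw [div_eq_iff hne]; linear_combination (-(nn k : ℝ)) * hsq
      rw [hd]; ring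
  · rintro ⟨p, ⟨m, n, rfl⟩, hW, rfl⟩
    simp only [Prod.smul_mk, smul_eq_mul, Prod.mk_add_mk, Set.mem_Ico] at hW ⊢
    obtain ⟨hlo, hhi⟩ := hW
    have hneg : (-1 : ℝ) / τ = 1 - τ := by rw [neg_div, hinv]; ring
    rw [hneg] at hlo hhi
    refine ⟨m + n, ?_⟩
    have hfl : ⌊((m : ℝ) + (n : ℝ) - 1) / τ⌋ = n - 1 := by
      rw [Int.floor_eq_iff]
      push_cast
      constructor
      · rw [le_div_iff₀ hτ]
        nlinarith
      · rw [div_lt_iff₀ hτ]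
        nlinarith
    have hnn : nn (m + n) = n := by
      simp only [nn]
      rw [show (((m + n : ℤ) : ℝ) - 1) = ((m : ℝ) + (n : ℝ) - 1) by push_cast; ring, hfl]
      ring
    simp only [ff, hnn]
    push_cast
    have hd : (n : ℝ) / τ = (n : ℝ) * (τ - 1) := by
      rw [div_eq_iff hne]; linear_combination (-(n : ℝ)) * hsq
    rw [hd]; ring

lemma ff_strictMono : StrictMono ff := by
  have hτ := tau_pos
  apply strictMono_int_of_lt_succ
  intro k
  have hm : nn k ≤ nn (k + 1) := by
    have : ((k : ℝ) - 1) / τ ≤ (((k + 1 : ℤ) : ℝ) - 1) / τ := by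
      apply div_le_div_of_nonneg_right ?_ hτ.le |>.trans_eq rfl
      push_cast; linarith
    exact add_le_add_left (Int.floor_le_floor this) 1
  simp only [ff]
  push_cast
  have : (nn k : ℝ) ≤ (nn (k + 1) : ℝ) := by exact_mod_cast hm
  have hdiv : (nn k : ℝ) / τ ≤ (nn (k + 1) : ℝ) / τ := by
    apply div_le_div_of_nonneg_right this hτ.le |>.trans_eq rfl
  linarith

lemma ff_bound (k : ℤ) : |ff k - (τ + 2) / (τ + 1) * k| < 1 := by
  have hτ := tau_pos
  have hne := tau_pos.ne'
  have hinv := tau_inv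
  have hsq := tau_sq
  obtain ⟨hlo, hhi⟩ := delta_bounds k
  have hne1 : τ + 1 ≠ 0 := by positivity
  have hlo' : 1 - τ ≤ (k : ℝ) - (nn k : ℝ) * τ := by
    have hneg : (-1 : ℝ) / τ = 1 - τ := by rw [neg_div, hinv]; ring
    linarith [hneg ▸ hlo]
  have hs : (τ + 2) / (τ + 1) = 3 - τ := by
    rw [div_eq_iff hne1]; linear_combination hsq
  have hd : (nn k : ℝ) / τ = (nn k : ℝ) * (τ - 1) := by
    rw [div_eq_iff hne]; linear_combination (-(nn k : ℝ)) * hsq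
  have key : ff k - (τ + 2) / (τ + 1) * k = -((k : ℝ) - (nn k : ℝ) * τ) / (τ + 1) := by
    rw [hs, eq_div_iff hne1]
    simp only [ff]
    rw [hd]
    linear_combination ((k : ℝ) + (nn k : ℝ)) * hsq
  rw [key, abs_div, abs_of_pos (by linarith : (0:ℝ) < τ + 1), div_lt_one (by linarith),
    abs_lt]
  have := one_lt_tau
  constructor <;> linarith

theorem fibonacci_bde_lattice :
    BDE (cps (Set.Ico (-1 / τ) 1))
      (Set.range fun n : ℤ => ((τ + 2) / (τ + 1)) * n) := by
  have hτ1 := one_lt_tau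
  have hinj : Function.Injective ff := ff_strictMono.injective
  have hs0 : (τ + 2) / (τ + 1) ≠ 0 :=
    ne_of_gt (div_pos (by linarith) (by linarith))
  have hg : Function.Injective (fun n : ℤ => ((τ + 2) / (τ + 1)) * (n : ℝ)) := by
    intro a b h
    simp only at h
    have : (a : ℝ) = b := mul_left_cancel₀ hs0 h
    exact_mod_cast this
  refine ⟨1, one_pos, ?_⟩
  refine ⟨(Equiv.setCongr range_ff.symm).trans
    ((Equiv.ofInjective ff hinj).symm.trans (Equiv.ofInjective _ hg)), ?_⟩
  intro x
  set k := (Equiv.ofInjective ff hinj).symm (Equiv.setCongr range_ff.symm x) with hk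
  have h1 : ff k = (x : ℝ) := by
    have h := congrArg Subtype.val
      ((Equiv.ofInjective ff hinj).apply_symm_apply (Equiv.setCongr range_ff.symm x))
    simp only [Equiv.ofInjective_apply, Equiv.setCongr_apply] at h
    exact h
  have h2 : (((Equiv.setCongr range_ff.symm).trans
      ((Equiv.ofInjective ff hinj).symm.trans (Equiv.ofInjective _ hg))) x : ℝ)
      = (τ + 2) / (τ + 1) * k := by
    simp [Equiv.trans_apply, Equiv.ofInjective_apply, hk]
  rw [h2, ← h1]
  exact ff_bound k
end
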